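/- arXiv:1212.3378 — 8 statements merged into one kernel-verified Lean document; each statement's English description precedes it below -/
import Mathlib

section
/- Suppose a measurement device can be programmed to perform any one of n pairwise distinct projective measurements {Π_k^{(i)}}_k (i = 1,…,n) on a system Hilbert space H_s, using program states ρ_1,…,ρ_n on H_a: there is a single POVM {E_k} on H_s ⊗ H_a with Tr(E_k(ρ ⊗ ρ_i)) = Tr(Π_k^{(i)} ρ) for all states ρ, all k, and all i. Then the program states ρ_1,…,ρ_n have mutually orthogonal supports, and consequently dim H_a ≥ n. -/
/-!
Write `Π = Π_k^{(i)}`. Since `0 ≤ E_k ≤ 1`, and the programming identity gives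
`Tr((1 - E_k)(Π ⊗ ρ_i)) = 0` and `Tr(E_k((1 - Π) ⊗ ρ_i)) = 0`, the fact that `Tr(AB) = 0` forces
`AB = 0` for positive semidefinite `A, B` yields `E_k (1 ⊗ ρ_i) = Π ⊗ ρ_i`. Sandwiching `E_k`
between `1 ⊗ ρ_j` and `1 ⊗ ρ_i` then gives `Π_k^{(i)} ⊗ ρ_j ρ_i = Π_k^{(j)} ⊗ ρ_j ρ_i`, so
`ρ_j ρ_i ≠ 0` would make the two measurements equal. Nonzero Hermitian matrices with pairwise
vanishing products have mutually orthogonal ranges, hence there are at most `dim H_a` of them.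
-/

open Matrix
open scoped ComplexOrder Kronecker MatrixOrder

namespace Matrix

variable {𝕜 n : Type*} [RCLike 𝕜] [Fintype n]

theorem PosSemidef.mul_eq_zero_of_trace_mul_eq_zero {A B : Matrix n n 𝕜} (hA : A.PosSemidef)
    (hB : B.PosSemidef) (h : (A * B).trace = 0) : A * B = 0 := by
  classical
  -- with `A = X⋆X` and `B = Y⋆Y`, `Tr(AB) = Tr((XY⋆)ᴴ(XY⋆))`
  obtain ⟨X, rfl⟩ := CStarAlgebra.nonneg_iff_eq_star_mul_self.mp hA.nonneg
  obtain ⟨Y, rfl⟩ := CStarAlgebra.nonneg_iff_eq_star_mul_self.mp hB.nonneg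
  have hXY : X * star Y = 0 := by
    rw [← trace_conjTranspose_mul_self_eq_zero_iff, ← h, conjTranspose_mul,
      ← star_eq_conjTranspose, ← star_eq_conjTranspose, star_star, ← mul_assoc,
      trace_mul_comm, trace_mul_comm (star X * X)]
    simp only [mul_assoc]
  rw [mul_assoc, ← mul_assoc X, hXY, zero_mul, mul_zero]

theorem PosSemidef.exists_eq_trace_smul {σ : Matrix n n 𝕜} (hσ : σ.PosSemidef) (h0 : σ ≠ 0) :
    ∃ τ : Matrix n n 𝕜, τ.PosSemidef ∧ τ.trace = 1 ∧ σ = σ.trace • τ := by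
  have htr : σ.trace ≠ 0 := fun h => h0 (hσ.trace_eq_zero_iff.mp h)
  refine ⟨σ.trace⁻¹ • σ, hσ.smul ?_, ?_, ?_⟩
  · exact (RCLike.inv_pos_of_pos (hσ.trace_nonneg.lt_of_ne htr.symm)).le
  · rw [trace_smul, smul_eq_mul, inv_mul_cancel₀ htr]
  · rw [smul_smul, mul_inv_cancel₀ htr, one_smul]

theorem kronecker_left_injective {R l m p q : Type*} [MulZeroClass R] [IsRightCancelMulZero R]
    {C : Matrix p q R} (hC : C ≠ 0) : Function.Injective fun A : Matrix l m R => A ⊗ₖ C := by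
  obtain ⟨x, y, hxy⟩ : ∃ x y, C x y ≠ 0 := by
    by_contra! hc
    exact hC (ext hc)
  intro A B h
  ext u v
  exact mul_right_cancel₀ hxy (congr_fun₂ h (u, x) (v, y))

theorem card_le_card_of_pairwise_mul_eq_zero {ι : Type*} [Fintype ι] {ρ : ι → Matrix n n 𝕜}
    (hρ : ∀ i, (ρ i).IsHermitian) (hne : ∀ i, ρ i ≠ 0) (horth : Pairwise fun i j => ρ i * ρ j = 0) :
    Fintype.card ι ≤ Fintype.card n := by
  classical
  have hvec : ∀ i, ∃ v, ρ i *ᵥ v ≠ 0 := by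
    intro i
    by_contra! h
    exact hne i (ext_of_mulVec_single fun j => by rw [h, zero_mulVec])
  choose v hv using hvec
  let w : ι → EuclideanSpace 𝕜 n := fun i => WithLp.toLp 2 (ρ i *ᵥ v i)
  have hw : LinearIndependent 𝕜 w := by
    refine linearIndependent_of_ne_zero_of_inner_eq_zero (fun i => ?_) fun i j hij => ?_
    · exact (WithLp.toLp_eq_zero 2).ne.mpr (hv i)
    · dsimp only [w]
      rw [EuclideanSpace.inner_toLp_toLp, star_mulVec, (hρ i).eq, dotProduct_comm,
        ← dotProduct_mulVec, mulVec_mulVec, horth hij, zero_mulVec, dotProduct_zero]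
  simpa using hw.fintype_card_le_finrank

end Matrix

section Programming

variable {𝕜 s a : Type*} [RCLike 𝕜] [Fintype s] [Fintype a]
  {E : Matrix (s × a) (s × a) 𝕜} {ρ : Matrix a a 𝕜} {P : Matrix s s 𝕜}

theorem trace_mul_kronecker_eq_of_forall_trace_eq_one
    (hsim : ∀ σ : Matrix s s 𝕜, σ.PosSemidef → σ.trace = 1 →
      (E * (σ ⊗ₖ ρ)).trace = (P * σ).trace)
    {σ : Matrix s s 𝕜} (hσ : σ.PosSemidef) : (E * (σ ⊗ₖ ρ)).trace = (P * σ).trace := by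
  obtain rfl | hσ0 := eq_or_ne σ 0
  · simp
  obtain ⟨τ, hτ, hτ1, hστ⟩ := hσ.exists_eq_trace_smul hσ0
  rw [hστ, smul_kronecker, Matrix.mul_smul, trace_smul, Matrix.mul_smul, trace_smul,
    hsim τ hτ hτ1]

theorem mul_one_kronecker_eq_kronecker [DecidableEq s] [DecidableEq a] (hE : 0 ≤ E)
    (hE1 : E ≤ 1) (hP : IsStarProjection P) (hρ : ρ.PosSemidef) (hρ1 : ρ.trace = 1)
    (hsim : ∀ σ : Matrix s s 𝕜, σ.PosSemidef → σ.trace = 1 →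
      (E * (σ ⊗ₖ ρ)).trace = (P * σ).trace) :
    E * (1 ⊗ₖ ρ) = P ⊗ₖ ρ := by
  have hP0 : P.PosSemidef := hP.nonneg.posSemidef
  have hQ0 : (1 - P).PosSemidef := hP.one_sub.nonneg.posSemidef
  have hfix : (1 - E) * (P ⊗ₖ ρ) = 0 := by
    refine (sub_nonneg.mpr hE1).posSemidef.mul_eq_zero_of_trace_mul_eq_zero (hP0.kronecker hρ) ?_
    rw [sub_mul, one_mul, trace_sub, trace_mul_kronecker_eq_of_forall_trace_eq_one hsim hP0,
      hP.isIdempotentElem.eq, trace_kronecker, hρ1, mul_one, sub_self]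
  have hkill : E * ((1 - P) ⊗ₖ ρ) = 0 := by
    refine hE.posSemidef.mul_eq_zero_of_trace_mul_eq_zero (hQ0.kronecker hρ) ?_
    rw [trace_mul_kronecker_eq_of_forall_trace_eq_one hsim hQ0, hP.mul_one_sub_self, trace_zero]
  rw [sub_mul, one_mul, sub_eq_zero] at hfix
  rw [← add_sub_cancel P 1, add_kronecker, mul_add, hkill, add_zero]
  exact hfix.symm

theorem eq_of_mul_one_kronecker_eq [DecidableEq s] {ρ' : Matrix a a 𝕜} {P' : Matrix s s 𝕜}
    (hE : E.IsHermitian) (hρ' : ρ'.IsHermitian) (hP' : P'.IsHermitian) (h : E * (1 ⊗ₖ ρ) = P ⊗ₖ ρ)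
    (h' : E * (1 ⊗ₖ ρ') = P' ⊗ₖ ρ') (hρρ' : ρ' * ρ ≠ 0) : P = P' := by
  have h'' : (1 ⊗ₖ ρ') * E = P' ⊗ₖ ρ' := by
    simpa [conjTranspose_kronecker, hE.eq, hρ'.eq, hP'.eq] using congr_arg conjTranspose h'
  refine kronecker_left_injective hρρ' ?_
  calc P ⊗ₖ (ρ' * ρ) = (1 ⊗ₖ ρ') * (E * (1 ⊗ₖ ρ)) := by rw [h, ← mul_kronecker_mul, one_mul]
    _ = P' ⊗ₖ (ρ' * ρ) := by rw [← mul_assoc, h'', ← mul_kronecker_mul, mul_one]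

end Programming

theorem no_programming_projective_measurements_general
    {s a κ : Type*} [Fintype s] [DecidableEq s] [Fintype a] [DecidableEq a] [Fintype κ]
    (n : ℕ) (P : Fin n → κ → Matrix s s ℂ)
    (hherm : ∀ i k, (P i k).IsHermitian)
    (hidem : ∀ i k, P i k * P i k = P i k)
    (hdist : ∀ i j, i ≠ j → P i ≠ P j)
    (ρ : Fin n → Matrix a a ℂ)
    (hρ : ∀ i, (ρ i).PosSemidef ∧ (ρ i).trace = 1)
    (E : κ → Matrix (s × a) (s × a) ℂ)
    (hEpos : ∀ k, (E k).PosSemidef) (hEsum : ∑ k, E k = 1)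
    (hsim : ∀ i k, ∀ σ : Matrix s s ℂ, σ.PosSemidef → σ.trace = 1 →
      (E k * (σ ⊗ₖ ρ i)).trace = (P i k * σ).trace) :
    (∀ i j, i ≠ j → ρ i * ρ j = 0) ∧ n ≤ Fintype.card a := by
  have hE1 (k : κ) : E k ≤ 1 :=
    hEsum ▸ Finset.single_le_sum (fun l _ => (hEpos l).nonneg) (Finset.mem_univ k)
  have hprogram (i : Fin n) (k : κ) : E k * (1 ⊗ₖ ρ i) = P i k ⊗ₖ ρ i :=
    mul_one_kronecker_eq_kronecker (hEpos k).nonneg (hE1 k) ⟨hidem i k, hherm i k⟩ (hρ i).1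
      (hρ i).2 (hsim i k)
  have horth (i j : Fin n) (hij : i ≠ j) : ρ i * ρ j = 0 := by
    by_contra hne
    exact hdist j i hij.symm <| funext fun k => eq_of_mul_one_kronecker_eq (hEpos k).isHermitian
      (hρ i).1.isHermitian (hherm i k) (hprogram j k) (hprogram i k) hne
  refine ⟨horth, ?_⟩
  have hne (i : Fin n) : ρ i ≠ 0 := fun h => by simpa [h] using (hρ i).2
  simpa using card_le_card_of_pairwise_mul_eq_zero (fun i => (hρ i).1.isHermitian) hne horth

/-- No-programming theorem for projective measurements: if one POVM `{E_k}` on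
system⊗program programs `n` pairwise distinct projective measurements
`{P i k}_k` via program states `ρ i`, then the program states have mutually
orthogonal supports, and hence `dim H_a ≥ n`. -/
theorem no_programming_projective_measurements
    {s a κ : Type*} [Fintype s] [DecidableEq s] [Fintype a] [DecidableEq a] [Fintype κ]
    (n : ℕ) (P : Fin n → κ → Matrix s s ℂ)
    (hherm : ∀ i k, (P i k).IsHermitian)
    (hidem : ∀ i k, P i k * P i k = P i k)
    (horth : ∀ i k l, k ≠ l → P i k * P i l = 0)
    (hsum : ∀ i, ∑ k, P i k = 1)
    (hdist : ∀ i j, i ≠ j → P i ≠ P j)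
    (ρ : Fin n → Matrix a a ℂ)
    (hρ : ∀ i, (ρ i).PosSemidef ∧ (ρ i).trace = 1)
    (E : κ → Matrix (s × a) (s × a) ℂ)
    (hEpos : ∀ k, (E k).PosSemidef) (hEsum : ∑ k, E k = 1)
    (hsim : ∀ i k, ∀ σ : Matrix s s ℂ, σ.PosSemidef → σ.trace = 1 →
      (E k * (σ ⊗ₖ ρ i)).trace = (P i k * σ).trace) :
    (∀ i j, i ≠ j → ρ i * ρ j = 0) ∧ n ≤ Fintype.card a :=
  no_programming_projective_measurements_general n P hherm hidem hdist ρ hρ E hEpos hEsum hsim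
end

section
/- If there exists a POVM {E_+, E_-} on ℂ²⊗H_a and unit vectors |φ_z⟩, |φ_x⟩ in H_a such that the device outputs '+' with certainty on input |+z⟩⊗|φ_z⟩ and on input |+x⟩⊗|φ_x⟩, and outputs '−' with certainty on inputs |−z⟩⊗|φ_z⟩ and |−x⟩⊗|φ_x⟩, then |φ_z⟩ and |φ_x⟩ are orthogonal. -/
/-!
A sharp measurement fixes the states it accepts with certainty: `⟨ψ|E|ψ⟩ = ‖ψ‖²` together with
`I - E ≥ 0` forces `Eψ = ψ`, and `⟨χ|E|χ⟩ = 0` together with `E ≥ 0` forces `Eχ = 0`. Hence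
`|+x⟩⊗|φ_x⟩` lies in the `1`-eigenspace and `|−z⟩⊗|φ_z⟩` in the kernel of the Hermitian `E`, so
they are orthogonal. Their inner product factors as `⟨−z|+x⟩⟨φ_z|φ_x⟩ = ⟨φ_z|φ_x⟩/√2`.
-/

open Matrix
open scoped ComplexOrder

section

variable {𝕜 : Type*} [RCLike 𝕜] {n : Type*} [Fintype n]

theorem Matrix.PosSemidef.mulVec_eq_self_of_dotProduct_mulVec_eq [DecidableEq n]
    {E : Matrix n n 𝕜} (hE' : (1 - E).PosSemidef) {ψ : n → 𝕜}
    (h : star ψ ⬝ᵥ (E *ᵥ ψ) = star ψ ⬝ᵥ ψ) : E *ᵥ ψ = ψ := by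
  have hker : (1 - E) *ᵥ ψ = 0 :=
    (hE'.dotProduct_mulVec_zero_iff ψ).mp <| by
      rw [sub_mulVec, one_mulVec, dotProduct_sub, h, sub_self]
  rw [sub_mulVec, one_mulVec, sub_eq_zero] at hker
  exact hker.symm

theorem Matrix.IsHermitian.dotProduct_eq_zero_of_mulVec_eq_zero_of_mulVec_eq_self
    {E : Matrix n n 𝕜} (hE : E.IsHermitian) {χ ψ : n → 𝕜}
    (hχ : E *ᵥ χ = 0) (hψ : E *ᵥ ψ = ψ) : star χ ⬝ᵥ ψ = 0 :=
  calc star χ ⬝ᵥ ψ = star χ ⬝ᵥ (E *ᵥ ψ) := by rw [hψ]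
    _ = star (E *ᵥ χ) ⬝ᵥ ψ := by rw [dotProduct_mulVec, star_mulVec, hE.eq]
    _ = 0 := by rw [hχ, star_zero, zero_dotProduct]

end

theorem star_tensor_dotProduct_tensor {R : Type*} [CommSemiring R] [StarRing R]
    {ι κ : Type*} [Fintype ι] [Fintype κ] (u v : ι → R) (f g : κ → R) :
    star (fun p : ι × κ => u p.1 * f p.2) ⬝ᵥ (fun p : ι × κ => v p.1 * g p.2)
      = (star u ⬝ᵥ v) * (star f ⬝ᵥ g) := by
  simp only [dotProduct, Pi.star_apply, star_mul', Fintype.sum_prod_type, Finset.sum_mul_sum]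
  exact Finset.sum_congr rfl fun i _ => Finset.sum_congr rfl fun j _ => by ring

theorem star_inv_sqrt_two_mul_self :
    star (Real.sqrt 2 : ℂ)⁻¹ * (Real.sqrt 2 : ℂ)⁻¹ = 2⁻¹ := by
  rw [star_inv₀, Complex.star_def, Complex.conj_ofReal, ← mul_inv, ← Complex.ofReal_mul,
    Real.mul_self_sqrt zero_le_two, Complex.ofReal_ofNat]

theorem spin_programming_orthogonality_general
    {a : Type*} [Fintype a] [DecidableEq a]
    (φz φx : a → ℂ) (hφx : star φx ⬝ᵥ φx = 1)
    (E : Matrix (Fin 2 × a) (Fin 2 × a) ℂ)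
    (hE : E.PosSemidef) (hE' : (1 - E).PosSemidef)
    (zm : Fin 2 → ℂ) (xp : Fin 2 → ℂ)
    (hzm : zm = ![0, 1])
    (hxp : xp = ![(Real.sqrt 2 : ℂ)⁻¹, (Real.sqrt 2 : ℂ)⁻¹])
    (hpx : star (fun p : Fin 2 × a => xp p.1 * φx p.2) ⬝ᵥ
        (E *ᵥ fun p : Fin 2 × a => xp p.1 * φx p.2) = 1)
    (hmz : star (fun p : Fin 2 × a => zm p.1 * φz p.2) ⬝ᵥ
        (E *ᵥ fun p : Fin 2 × a => zm p.1 * φz p.2) = 0) :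
    star φz ⬝ᵥ φx = 0 := by
  have hxp_unit : star xp ⬝ᵥ xp = 1 := by
    simp only [hxp, dotProduct, Fin.sum_univ_two, Pi.star_apply, Matrix.cons_val_zero,
      Matrix.cons_val_one, star_inv_sqrt_two_mul_self]
    norm_num
  have hzm_xp : star zm ⬝ᵥ xp = (Real.sqrt 2 : ℂ)⁻¹ := by
    simp [hzm, hxp, dotProduct, Fin.sum_univ_two]
  have hEx : (E *ᵥ fun p : Fin 2 × a => xp p.1 * φx p.2) = fun p => xp p.1 * φx p.2 :=
    hE'.mulVec_eq_self_of_dotProduct_mulVec_eq <| by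
      rw [hpx, star_tensor_dotProduct_tensor, hxp_unit, hφx, one_mul]
  have hEz : (E *ᵥ fun p : Fin 2 × a => zm p.1 * φz p.2) = 0 :=
    (hE.dotProduct_mulVec_zero_iff _).mp hmz
  have horth := hE.isHermitian.dotProduct_eq_zero_of_mulVec_eq_zero_of_mulVec_eq_self hEz hEx
  rw [star_tensor_dotProduct_tensor, hzm_xp] at horth
  exact (mul_eq_zero.mp horth).resolve_left (by simp)

/-- If a two-outcome POVM `{E₊, I−E₊}` on ℂ²⊗H_a outputs '+' with certainty on
`|+z⟩⊗|φ_z⟩` and `|+x⟩⊗|φ_x⟩`, and '−' with certainty on `|−z⟩⊗|φ_z⟩` and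
`|−x⟩⊗|φ_x⟩`, then `⟨φ_z|φ_x⟩ = 0`. -/
theorem spin_programming_orthogonality
    {a : Type*} [Fintype a] [DecidableEq a]
    (φz φx : a → ℂ) (hφz : star φz ⬝ᵥ φz = 1) (hφx : star φx ⬝ᵥ φx = 1)
    (E : Matrix (Fin 2 × a) (Fin 2 × a) ℂ)
    (hE : E.PosSemidef) (hE' : (1 - E).PosSemidef)
    (zp : Fin 2 → ℂ) (zm : Fin 2 → ℂ) (xp : Fin 2 → ℂ) (xm : Fin 2 → ℂ)
    (hzp : zp = ![1, 0]) (hzm : zm = ![0, 1])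
    (hxp : xp = ![(Real.sqrt 2 : ℂ)⁻¹, (Real.sqrt 2 : ℂ)⁻¹])
    (hxm : xm = ![(Real.sqrt 2 : ℂ)⁻¹, -(Real.sqrt 2 : ℂ)⁻¹])
    (hpz : star (fun p : Fin 2 × a => zp p.1 * φz p.2) ⬝ᵥ
        (E *ᵥ fun p : Fin 2 × a => zp p.1 * φz p.2) = 1)
    (hpx : star (fun p : Fin 2 × a => xp p.1 * φx p.2) ⬝ᵥ
        (E *ᵥ fun p : Fin 2 × a => xp p.1 * φx p.2) = 1)
    (hmz : star (fun p : Fin 2 × a => zm p.1 * φz p.2) ⬝ᵥ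
        (E *ᵥ fun p : Fin 2 × a => zm p.1 * φz p.2) = 0)
    (hmx : star (fun p : Fin 2 × a => xm p.1 * φx p.2) ⬝ᵥ
        (E *ᵥ fun p : Fin 2 × a => xm p.1 * φx p.2) = 0) :
    star φz ⬝ᵥ φx = 0 :=
  spin_programming_orthogonality_general φz φx hφx E hE hE' zm xp hzm hxp hpx hmz
end

section
/- Let |α⟩, |β⟩ be unit vectors in H_s with ⟨α|β⟩ ≠ 0, and let |φ₁⟩, |φ₂⟩ be unit vectors in H_a. If there is an effect E on H_s ⊗ H_a with ⟨α⊗φ₁|E|α⊗φ₁⟩ = 1 and ⟨β⊗φ₂|E|β⊗φ₂⟩ = 0, then ⟨φ₁|φ₂⟩ = 0. -/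
open Matrix
open scoped ComplexOrder

/-! The effect accepts `α ⊗ φ₁` with certainty, so `1 - E` annihilates it and `α ⊗ φ₁` is a
`1`-eigenvector of `E`; it rejects `β ⊗ φ₂` with certainty, so `β ⊗ φ₂` lies in the kernel of `E`.
Eigenvectors of a Hermitian matrix for different eigenvalues are orthogonal, hence
`0 = ⟨α ⊗ φ₁|β ⊗ φ₂⟩ = ⟨α|β⟩⟨φ₁|φ₂⟩`, and `⟨α|β⟩ ≠ 0` forces `⟨φ₁|φ₂⟩ = 0`. -/

namespace Matrix

variable {m n R : Type*}

def kronVec [Mul R] (x : m → R) (y : n → R) : m × n → R := fun p => x p.1 * y p.2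

theorem star_kronVec_dotProduct_kronVec [Fintype m] [Fintype n] [CommSemiring R] [StarRing R]
    (x₁ x₂ : m → R) (y₁ y₂ : n → R) :
    star (kronVec x₁ y₁) ⬝ᵥ kronVec x₂ y₂ = (star x₁ ⬝ᵥ x₂) * (star y₁ ⬝ᵥ y₂) := by
  simp only [kronVec, dotProduct, Pi.star_apply, Fintype.sum_prod_type, star_mul',
    Finset.sum_mul_sum]
  exact Finset.sum_congr rfl fun _ _ => Finset.sum_congr rfl fun _ _ => by ring

theorem IsHermitian.star_dotProduct_eq_zero_of_mulVec_eq_self_of_mulVec_eq_zero [Fintype n]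
    [Semiring R] [StarRing R] {E : Matrix n n R} (hE : E.IsHermitian) {u v : n → R}
    (hu : E *ᵥ u = u) (hv : E *ᵥ v = 0) : star u ⬝ᵥ v = 0 :=
  calc star u ⬝ᵥ v = star (E *ᵥ u) ⬝ᵥ v := by rw [hu]
    _ = star u ⬝ᵥ E *ᵥ v := by rw [star_mulVec, ← dotProduct_mulVec, hE.eq]
    _ = 0 := by rw [hv, dotProduct_zero]

theorem mulVec_eq_self_of_dotProduct_mulVec_eq {𝕜 : Type*} [RCLike 𝕜] [Fintype n]
    [DecidableEq n] {E : Matrix n n 𝕜} (hE : (1 - E).PosSemidef) {u : n → 𝕜}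
    (hu : star u ⬝ᵥ E *ᵥ u = star u ⬝ᵥ u) : E *ᵥ u = u := by
  have h : (1 - E) *ᵥ u = 0 := by
    rw [← hE.dotProduct_mulVec_zero_iff, sub_mulVec, one_mulVec, dotProduct_sub, hu, sub_self]
  rwa [sub_mulVec, one_mulVec, sub_eq_zero, eq_comm] at h

end Matrix

theorem effect_discrimination_forces_orthogonal_programs_general
    {s a : Type*} [Fintype s] [DecidableEq s] [Fintype a] [DecidableEq a]
    (α β : s → ℂ) (hα : star α ⬝ᵥ α = 1)
    (hab : star α ⬝ᵥ β ≠ 0)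
    (φ₁ φ₂ : a → ℂ) (hφ₁ : star φ₁ ⬝ᵥ φ₁ = 1)
    (E : Matrix (s × a) (s × a) ℂ) (hE : E.PosSemidef) (hE' : (1 - E).PosSemidef)
    (h₁ : star (fun p : s × a => α p.1 * φ₁ p.2) ⬝ᵥ
        (E *ᵥ fun p : s × a => α p.1 * φ₁ p.2) = 1)
    (h₂ : star (fun p : s × a => β p.1 * φ₂ p.2) ⬝ᵥ
        (E *ᵥ fun p : s × a => β p.1 * φ₂ p.2) = 0) :
    star φ₁ ⬝ᵥ φ₂ = 0 := by
  have hu : E *ᵥ kronVec α φ₁ = kronVec α φ₁ := mulVec_eq_self_of_dotProduct_mulVec_eq hE' <|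
    h₁.trans (by rw [star_kronVec_dotProduct_kronVec, hα, hφ₁, one_mul])
  have hv : E *ᵥ kronVec β φ₂ = 0 := (hE.dotProduct_mulVec_zero_iff _).mp h₂
  have horth := hE.isHermitian.star_dotProduct_eq_zero_of_mulVec_eq_self_of_mulVec_eq_zero hu hv
  rw [star_kronVec_dotProduct_kronVec] at horth
  exact (mul_eq_zero.mp horth).resolve_left hab

/-- If an effect `E` on `H_s ⊗ H_a` accepts `α ⊗ φ₁` with certainty and rejects
`β ⊗ φ₂` with certainty, while `⟨α|β⟩ ≠ 0`, then the program states `φ₁`, `φ₂`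
must be orthogonal. -/
theorem effect_discrimination_forces_orthogonal_programs
    {s a : Type*} [Fintype s] [DecidableEq s] [Fintype a] [DecidableEq a]
    (α β : s → ℂ) (hα : star α ⬝ᵥ α = 1) (hβ : star β ⬝ᵥ β = 1)
    (hab : star α ⬝ᵥ β ≠ 0)
    (φ₁ φ₂ : a → ℂ) (hφ₁ : star φ₁ ⬝ᵥ φ₁ = 1) (hφ₂ : star φ₂ ⬝ᵥ φ₂ = 1)
    (E : Matrix (s × a) (s × a) ℂ) (hE : E.PosSemidef) (hE' : (1 - E).PosSemidef)
    (h₁ : star (fun p : s × a => α p.1 * φ₁ p.2) ⬝ᵥ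
        (E *ᵥ fun p : s × a => α p.1 * φ₁ p.2) = 1)
    (h₂ : star (fun p : s × a => β p.1 * φ₂ p.2) ⬝ᵥ
        (E *ᵥ fun p : s × a => β p.1 * φ₂ p.2) = 0) :
    star φ₁ ⬝ᵥ φ₂ = 0 :=
  effect_discrimination_forces_orthogonal_programs_general α β hα hab φ₁ φ₂ hφ₁ E hE hE' h₁ h₂
end

section
/- Let G be a finite group acting via a unitary representation U_a on H_a and U_s on H_s, and let {Π_k} be a projective measurement on H_s such that the group orbit {(U_s(g)Π_k U_s(g)†)_k : g ∈ G} contains at least n distinct projective measurements. If a state ρ_a on H_a satisfies: there exists a POVM {E_k} on H_s⊗H_a with Tr(E_k(ρ_s ⊗ U_a(g)ρ_a U_a(g)†)) = Tr(U_s(g)Π_k U_s(g)† ρ_s) for all g ∈ G, all states ρ_s, and all k; then the distinct states among {U_a(g)ρ_a U_a(g)† : g ∈ G} corresponding to distinct measurements are mutually orthogonal (product zero), and dim H_a ≥ n. -/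
open Matrix
open scoped ComplexOrder Kronecker

/-! Let `Q = U P U†` and `Q'` be two measurements in the orbit, programmed by the states `σ` and
`σ'`. Since `Tr (E k (Q k ⊗ σ)) = Tr (Q k) = Tr (Q k ⊗ σ)`, the positive operator `1 - E k` kills
`Q k ⊗ σ`, so `(Q k ⊗ σ) E k = Q k ⊗ σ`; for `j ≠ k`, `Tr (E k (Q' j ⊗ σ')) = Tr (Q' k Q' j) = 0`
gives `E k (Q' j ⊗ σ') = 0`. Multiplying, `(Q k Q' j) ⊗ (σ σ') = 0`. If `σ σ' ≠ 0`, then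
`Q k Q' j = 0` for all `j ≠ k`, and the two resolutions of the identity force
`Q k = Q k Q' k = Q' k`. Hence distinct measurements need orthogonal program states, and `n`
pairwise orthogonal nonzero Hermitian matrices on `H_a` have mutually orthogonal nonzero ranges,
so `n ≤ dim H_a`. -/

theorem eq_of_mul_eq_zero_of_sum_eq_one {R κ : Type*} [Semiring R] [Fintype κ] {e f : κ → R}
    (he : ∑ k, e k = 1) (hf : ∑ k, f k = 1) (h : ∀ k j, k ≠ j → e k * f j = 0) : e = f := by
  funext k
  calc e k = e k * ∑ j, f j := by rw [hf, mul_one]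
    _ = e k * f k := by
      rw [Finset.mul_sum, Finset.sum_eq_single k (fun j _ hj => h k j hj.symm) (by simp)]
    _ = ∑ j, e j * f k := by
      rw [Finset.sum_eq_single k (fun j _ hj => h j k hj) (by simp)]
    _ = f k := by rw [← Finset.sum_mul, he, one_mul]

theorem Matrix.kronecker_eq_zero_iff {R l m n p : Type*} [MulZeroClass R] [NoZeroDivisors R]
    {A : Matrix l m R} {B : Matrix n p R} : A ⊗ₖ B = 0 ↔ A = 0 ∨ B = 0 := by
  refine ⟨fun h => ?_, ?_⟩
  · by_contra! hAB
    obtain ⟨⟨i, j, hij⟩, ⟨k, l, hkl⟩⟩ : (∃ i j, A i j ≠ 0) ∧ ∃ k l, B k l ≠ 0 := by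
      simpa [← Matrix.ext_iff] using hAB
    exact mul_ne_zero hij hkl (by simpa using congrFun₂ h (i, k) (j, l))
  · rintro (rfl | rfl) <;> simp

section RCLike

variable {𝕜 n : Type*} [RCLike 𝕜] [Fintype n]

-- With `A = X⋆X` and `B = Y⋆Y`, `Tr (A B)` is the squared Frobenius norm of `Y X⋆`.
open scoped MatrixOrder in
theorem Matrix.PosSemidef.mul_eq_zero_of_trace_mul_eq_zero_s6 {A B : Matrix n n 𝕜}
    (hA : A.PosSemidef) (hB : B.PosSemidef) (h : (A * B).trace = 0) : A * B = 0 := by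
  classical
  obtain ⟨X, rfl⟩ := CStarAlgebra.nonneg_iff_eq_star_mul_self.mp hA.nonneg
  obtain ⟨Y, rfl⟩ := CStarAlgebra.nonneg_iff_eq_star_mul_self.mp hB.nonneg
  have hC : Y * star X = 0 := by
    refine trace_conjTranspose_mul_self_eq_zero_iff.1 ?_
    rw [← h, conjTranspose_mul, star_eq_conjTranspose, star_eq_conjTranspose,
      conjTranspose_conjTranspose, Matrix.mul_assoc, trace_mul_comm X]
    simp only [Matrix.mul_assoc]
    rw [← Matrix.mul_assoc Yᴴ, trace_mul_comm, Matrix.mul_assoc]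
  calc star X * X * (star Y * Y) = star X * (Y * star X)ᴴ * Y := by
        rw [conjTranspose_mul, star_eq_conjTranspose, star_eq_conjTranspose,
          conjTranspose_conjTranspose]
        simp only [Matrix.mul_assoc]
    _ = 0 := by rw [hC]; simp

theorem Matrix.exists_mulVec_ne_zero [DecidableEq n] {A : Matrix n n 𝕜} (hA : A ≠ 0) :
    ∃ v, A *ᵥ v ≠ 0 := by
  by_contra! h
  exact hA (Matrix.toLin'.injective (LinearMap.ext fun v => by simpa using h v))

theorem Matrix.card_le_of_pairwise_mul_eq_zero {ι : Type*} [Fintype ι] {σ : ι → Matrix n n 𝕜}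
    (hσ : ∀ i, (σ i).IsHermitian) (hσ0 : ∀ i, σ i ≠ 0)
    (h : Pairwise fun i j => σ i * σ j = 0) : Fintype.card ι ≤ Fintype.card n := by
  classical
  choose v hv using fun i => exists_mulVec_ne_zero (hσ0 i)
  let w : ι → EuclideanSpace 𝕜 n := fun i => WithLp.toLp 2 (σ i *ᵥ v i)
  have hw : LinearIndependent 𝕜 w := by
    refine linearIndependent_of_ne_zero_of_inner_eq_zero (fun i => by simpa [w] using hv i)
      fun i j hij => ?_
    change inner 𝕜 (WithLp.toLp 2 _) (WithLp.toLp 2 _) = 0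
    rw [EuclideanSpace.inner_toLp_toLp, dotProduct_comm, star_mulVec, ← dotProduct_mulVec,
      (hσ i).eq, mulVec_mulVec, h hij, zero_mulVec, dotProduct_zero]
  simpa using hw.fintype_card_le_finrank

end RCLike

section Measurement

variable {𝕜 s κ : Type*} [RCLike 𝕜] [DecidableEq s] [Fintype κ]

structure IsPOVM (E : κ → Matrix s s 𝕜) : Prop where
  posSemidef : ∀ k, (E k).PosSemidef
  sum_eq_one : ∑ k, E k = 1

theorem IsPOVM.posSemidef_one_sub {E : κ → Matrix s s 𝕜} (hE : IsPOVM E) (k : κ) :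
    (1 - E k).PosSemidef := by
  classical
  rw [← hE.sum_eq_one, ← Finset.sum_erase_eq_sub (Finset.mem_univ k)]
  exact posSemidef_sum _ fun j _ => hE.posSemidef j

variable [Fintype s]

structure IsProjectiveMeasurement (P : κ → Matrix s s 𝕜) : Prop where
  isHermitian : ∀ k, (P k).IsHermitian
  mul_self : ∀ k, P k * P k = P k
  mul_eq_zero : ∀ k l, k ≠ l → P k * P l = 0
  sum_eq_one : ∑ k, P k = 1

namespace IsProjectiveMeasurement

variable {P : κ → Matrix s s 𝕜}

theorem posSemidef (hP : IsProjectiveMeasurement P) (k : κ) : (P k).PosSemidef := by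
  simpa only [(hP.isHermitian k).eq, hP.mul_self] using posSemidef_conjTranspose_mul_self (P k)

theorem conj (hP : IsProjectiveMeasurement P) {U : Matrix s s 𝕜}
    (hU : U ∈ unitary (Matrix s s 𝕜)) : IsProjectiveMeasurement fun k => U * P k * Uᴴ := by
  let f := Unitary.conjStarAlgAut 𝕜 (Matrix s s 𝕜) ⟨U, hU⟩
  have hf : ∀ x, U * x * Uᴴ = f x := fun x => rfl
  simp only [hf]
  refine ⟨fun k => IsSelfAdjoint.map (hP.isHermitian k) f, fun k => ?_, fun k l hkl => ?_, ?_⟩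
  · rw [← map_mul, hP.mul_self]
  · rw [← map_mul, hP.mul_eq_zero k l hkl, map_zero]
  · rw [← map_sum, hP.sum_eq_one, map_one]

end IsProjectiveMeasurement

end Measurement

section Programming

variable {𝕜 s a κ : Type*} [RCLike 𝕜] [Fintype s] [Fintype a]

/-- The program state `σ` on the ancilla makes the joint POVM `E` reproduce the statistics of the
measurement `Q` on every system state. -/
def Programs (E : κ → Matrix (s × a) (s × a) 𝕜) (σ : Matrix a a 𝕜) (Q : κ → Matrix s s 𝕜) :
    Prop :=
  ∀ k ρ, ρ.PosSemidef → ρ.trace = 1 → (E k * (ρ ⊗ₖ σ)).trace = (Q k * ρ).trace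

namespace Programs

variable {E : κ → Matrix (s × a) (s × a) 𝕜} {σ : Matrix a a 𝕜} {Q : κ → Matrix s s 𝕜}

theorem trace_mul_kronecker (h : Programs E σ Q) (k : κ) {ρ : Matrix s s 𝕜}
    (hρ : ρ.PosSemidef) : (E k * (ρ ⊗ₖ σ)).trace = (Q k * ρ).trace := by
  obtain h0 | ht := eq_or_ne ρ.trace 0
  · simp [hρ.trace_eq_zero_iff.1 h0]
  · have hρ' : (ρ.trace⁻¹ • ρ).PosSemidef := hρ.smul (inv_nonneg_of_nonneg hρ.trace_nonneg)
    have := h k _ hρ' (by rw [trace_smul, smul_eq_mul, inv_mul_cancel₀ ht])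
    rw [smul_kronecker, Matrix.mul_smul, trace_smul, Matrix.mul_smul, trace_smul] at this
    exact smul_right_injective _ (inv_ne_zero ht) this

variable [DecidableEq s] [DecidableEq a] [Fintype κ]

theorem kronecker_mul_eq_self (h : Programs E σ Q) (hE : IsPOVM E)
    (hQ : IsProjectiveMeasurement Q) (hσ : σ.PosSemidef) (hσ1 : σ.trace = 1) (k : κ) :
    (Q k ⊗ₖ σ) * E k = Q k ⊗ₖ σ := by
  have hρ := (hQ.posSemidef k).kronecker hσ
  have htr : ((Q k ⊗ₖ σ) * (1 - E k)).trace = 0 := by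
    rw [Matrix.mul_sub, Matrix.mul_one, trace_sub, trace_mul_comm, h.trace_mul_kronecker k
      (hQ.posSemidef k), hQ.mul_self, trace_kronecker, hσ1, mul_one, sub_self]
  have := hρ.mul_eq_zero_of_trace_mul_eq_zero_s6 (hE.posSemidef_one_sub k) htr
  rwa [Matrix.mul_sub, Matrix.mul_one, sub_eq_zero, eq_comm] at this

theorem mul_kronecker_eq_zero (h : Programs E σ Q) (hE : IsPOVM E)
    (hQ : IsProjectiveMeasurement Q) (hσ : σ.PosSemidef) {j k : κ} (hjk : j ≠ k) :
    E k * (Q j ⊗ₖ σ) = 0 :=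
  (hE.posSemidef k).mul_eq_zero_of_trace_mul_eq_zero_s6 ((hQ.posSemidef j).kronecker hσ) <| by
    rw [h.trace_mul_kronecker k (hQ.posSemidef j), hQ.mul_eq_zero k j hjk.symm, trace_zero]

theorem mul_eq_zero_of_ne {σ' : Matrix a a 𝕜} {Q' : κ → Matrix s s 𝕜} (h : Programs E σ Q)
    (h' : Programs E σ' Q') (hE : IsPOVM E) (hQ : IsProjectiveMeasurement Q)
    (hQ' : IsProjectiveMeasurement Q') (hσ : σ.PosSemidef) (hσ1 : σ.trace = 1)
    (hσ' : σ'.PosSemidef) (hne : Q ≠ Q') : σ * σ' = 0 := by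
  by_contra hσσ'
  refine hne (eq_of_mul_eq_zero_of_sum_eq_one hQ.sum_eq_one hQ'.sum_eq_one fun k j hkj => ?_)
  have : (Q k * Q' j) ⊗ₖ (σ * σ') = 0 := by
    rw [mul_kronecker_mul, ← h.kronecker_mul_eq_self hE hQ hσ hσ1 k, Matrix.mul_assoc,
      h'.mul_kronecker_eq_zero hE hQ' hσ' hkj.symm, Matrix.mul_zero]
  exact (kronecker_eq_zero_iff.1 this).resolve_right hσσ'

end Programs

end Programming

theorem way_no_go_from_no_programming_general
    {G : Type*} [Group G]
    {s a κ : Type*} [Fintype s] [DecidableEq s] [Fintype a] [DecidableEq a] [Fintype κ]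
    (Us : G →* Matrix.unitaryGroup s ℂ) (Ua : G →* Matrix.unitaryGroup a ℂ)
    (P : κ → Matrix s s ℂ)
    (hherm : ∀ k, (P k).IsHermitian) (hidem : ∀ k, P k * P k = P k)
    (horth : ∀ k l, k ≠ l → P k * P l = 0) (hsum : ∑ k, P k = 1)
    (n : ℕ) (g : Fin n → G)
    (hdist : ∀ i j, i ≠ j →
      (fun k => (Us (g i) : Matrix s s ℂ) * P k * (Us (g i) : Matrix s s ℂ)ᴴ) ≠
      (fun k => (Us (g j) : Matrix s s ℂ) * P k * (Us (g j) : Matrix s s ℂ)ᴴ))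
    (ρa : Matrix a a ℂ) (hρa : ρa.PosSemidef) (hρatr : ρa.trace = 1)
    (E : κ → Matrix (s × a) (s × a) ℂ)
    (hEpos : ∀ k, (E k).PosSemidef) (hEsum : ∑ k, E k = 1)
    (hsim : ∀ (h : G) (k : κ), ∀ ρs : Matrix s s ℂ, ρs.PosSemidef → ρs.trace = 1 →
      (E k * (ρs ⊗ₖ ((Ua h : Matrix a a ℂ) * ρa * (Ua h : Matrix a a ℂ)ᴴ))).trace =
      ((Us h : Matrix s s ℂ) * P k * (Us h : Matrix s s ℂ)ᴴ * ρs).trace) :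
    (∀ h h' : G,
      (fun k => (Us h : Matrix s s ℂ) * P k * (Us h : Matrix s s ℂ)ᴴ) ≠
      (fun k => (Us h' : Matrix s s ℂ) * P k * (Us h' : Matrix s s ℂ)ᴴ) →
      ((Ua h : Matrix a a ℂ) * ρa * (Ua h : Matrix a a ℂ)ᴴ) *
      ((Ua h' : Matrix a a ℂ) * ρa * (Ua h' : Matrix a a ℂ)ᴴ) = 0) ∧
    n ≤ Fintype.card a := by
  have hQ : ∀ h : G, IsProjectiveMeasurement
      fun k => (Us h : Matrix s s ℂ) * P k * (Us h : Matrix s s ℂ)ᴴ :=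
    fun h => IsProjectiveMeasurement.conj ⟨hherm, hidem, horth, hsum⟩ (Us h).2
  have hσ : ∀ h : G, ((Ua h : Matrix a a ℂ) * ρa * (Ua h : Matrix a a ℂ)ᴴ).PosSemidef :=
    fun h => hρa.mul_mul_conjTranspose_same _
  have hσ1 : ∀ h : G, ((Ua h : Matrix a a ℂ) * ρa * (Ua h : Matrix a a ℂ)ᴴ).trace = 1 := by
    intro h
    rw [trace_mul_cycle, ← star_eq_conjTranspose, Unitary.star_mul_self_of_mem (Ua h).2,
      Matrix.one_mul, hρatr]
  have horthogonal := fun h h' hne => Programs.mul_eq_zero_of_ne (hsim h) (hsim h')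
    ⟨hEpos, hEsum⟩ (hQ h) (hQ h') (hσ h) (hσ1 h) (hσ h') hne
  refine ⟨horthogonal, ?_⟩
  simpa using card_le_of_pairwise_mul_eq_zero (fun i => (hσ (g i)).isHermitian)
    (fun i h0 => by simpa [h0] using hσ1 (g i)) fun i j hij => horthogonal _ _ (hdist i j hij)

/-- WAY-type no-go result from no-programming: if a resource state `ρa`
covariantly programs the group orbit of a projective measurement `{P k}` whose
orbit contains at least `n` distinct projective measurements, then orbit states
corresponding to distinct measurements are mutually orthogonal, and
`dim H_a ≥ n`. -/
theorem way_no_go_from_no_programming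
    {G : Type*} [Group G] [Fintype G]
    {s a κ : Type*} [Fintype s] [DecidableEq s] [Fintype a] [DecidableEq a] [Fintype κ]
    (Us : G →* Matrix.unitaryGroup s ℂ) (Ua : G →* Matrix.unitaryGroup a ℂ)
    (P : κ → Matrix s s ℂ)
    (hherm : ∀ k, (P k).IsHermitian) (hidem : ∀ k, P k * P k = P k)
    (horth : ∀ k l, k ≠ l → P k * P l = 0) (hsum : ∑ k, P k = 1)
    (n : ℕ) (g : Fin n → G)
    (hdist : ∀ i j, i ≠ j →
      (fun k => (Us (g i) : Matrix s s ℂ) * P k * (Us (g i) : Matrix s s ℂ)ᴴ) ≠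
      (fun k => (Us (g j) : Matrix s s ℂ) * P k * (Us (g j) : Matrix s s ℂ)ᴴ))
    (ρa : Matrix a a ℂ) (hρa : ρa.PosSemidef) (hρatr : ρa.trace = 1)
    (E : κ → Matrix (s × a) (s × a) ℂ)
    (hEpos : ∀ k, (E k).PosSemidef) (hEsum : ∑ k, E k = 1)
    (hsim : ∀ (h : G) (k : κ), ∀ ρs : Matrix s s ℂ, ρs.PosSemidef → ρs.trace = 1 →
      (E k * (ρs ⊗ₖ ((Ua h : Matrix a a ℂ) * ρa * (Ua h : Matrix a a ℂ)ᴴ))).trace =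
      ((Us h : Matrix s s ℂ) * P k * (Us h : Matrix s s ℂ)ᴴ * ρs).trace) :
    (∀ h h' : G,
      (fun k => (Us h : Matrix s s ℂ) * P k * (Us h : Matrix s s ℂ)ᴴ) ≠
      (fun k => (Us h' : Matrix s s ℂ) * P k * (Us h' : Matrix s s ℂ)ᴴ) →
      ((Ua h : Matrix a a ℂ) * ρa * (Ua h : Matrix a a ℂ)ᴴ) *
      ((Ua h' : Matrix a a ℂ) * ρa * (Ua h' : Matrix a a ℂ)ᴴ) = 0) ∧
    n ≤ Fintype.card a :=
  way_no_go_from_no_programming_general Us Ua P hherm hidem horth hsum n g hdist ρa hρa hρatr E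
    hEpos hEsum hsim
end

section
/- Let U, V be distinct unitaries on H_s (distinct even up to global phase: V ≠ e^{iθ}U for all θ), and let |φ_U⟩, |φ_V⟩ be unit program states in H_a. If there exists a unitary W on H_s⊗H_a such that W(|ψ⟩⊗|φ_U⟩) = (U|ψ⟩)⊗|φ'_U(ψ)⟩ and W(|ψ⟩⊗|φ_V⟩) = (V|ψ⟩)⊗|φ'_V(ψ)⟩ for all unit |ψ⟩ ∈ H_s (with the residual program states |φ'_U⟩, |φ'_V⟩ independent of ψ), then ⟨φ_U|φ_V⟩ = 0. -/
open Matrix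
open scoped ComplexOrder

/-!
Unitarity of `W` preserves the inner product of `|i⟩ ⊗ |φU⟩` and `|j⟩ ⊗ |φV⟩`, which factors on
both sides of the gate: `δᵢⱼ ⟨φU|φV⟩ = (U† V)ᵢⱼ ⟨φU'|φV'⟩`. Hence `⟨φU|φV⟩ • 1 = ⟨φU'|φV'⟩ • U† V`.
If `⟨φU|φV⟩ ≠ 0`, then `⟨φU'|φV'⟩ ≠ 0` and `V` is a scalar multiple of `U`; the scalar has
modulus one because `U` and `V` are both unitary, so it is a global phase.
-/

namespace Matrix

variable {R m n : Type*} [CommRing R] [StarRing R]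

theorem star_mulVec_dotProduct_mulVec_of_mem_unitaryGroup [Fintype n] [DecidableEq n]
    {W : Matrix n n R} (hW : W ∈ unitaryGroup n R) (x y : n → R) :
    star (W *ᵥ x) ⬝ᵥ (W *ᵥ y) = star x ⬝ᵥ y := by
  rw [star_mulVec, dotProduct_mulVec, vecMul_vecMul, ← star_eq_conjTranspose,
    Unitary.star_mul_self_of_mem hW, vecMul_one]

theorem star_dotProduct_prod_mul [Fintype m] [Fintype n] (x y : m → R) (u v : n → R) :
    star (fun p : m × n => x p.1 * u p.2) ⬝ᵥ (fun p : m × n => y p.1 * v p.2) =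
      (star x ⬝ᵥ y) * (star u ⬝ᵥ v) := by
  simp only [dotProduct, Pi.star_apply, star_mul', Finset.sum_mul_sum, Fintype.sum_prod_type]
  exact Finset.sum_congr rfl fun _ _ => Finset.sum_congr rfl fun _ _ => by ring

theorem star_single_dotProduct_mulVec_single [Fintype n] [DecidableEq n]
    (M : Matrix n n R) (i j : n) :
    star (Pi.single i 1 : n → R) ⬝ᵥ (M *ᵥ Pi.single j 1) = M i j := by
  simp

theorem eq_smul_of_conjTranspose_mul_eq_smul_one [Fintype n] [DecidableEq n]
    {U V : Matrix n n R} {μ : R} (hU : U ∈ unitaryGroup n R) (h : Uᴴ * V = μ • 1) :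
    V = μ • U := calc
  V = U * (Uᴴ * V) := by
    rw [← Matrix.mul_assoc, ← star_eq_conjTranspose, Unitary.mul_star_self_of_mem hU,
      Matrix.one_mul]
  _ = μ • U := by rw [h, Matrix.mul_smul, Matrix.mul_one]

theorem smul_one_eq_smul_conjTranspose_mul_of_mulVec_prod [Fintype m] [DecidableEq m]
    [Fintype n] [DecidableEq n] {W : Matrix (m × n) (m × n) R} (hW : W ∈ unitaryGroup (m × n) R)
    {U V : Matrix m m R} {φU φV φU' φV' : n → R}
    (hWU : ∀ i, W *ᵥ (fun p : m × n => (Pi.single i 1 : m → R) p.1 * φU p.2) =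
      fun p : m × n => (U *ᵥ Pi.single i 1) p.1 * φU' p.2)
    (hWV : ∀ j, W *ᵥ (fun p : m × n => (Pi.single j 1 : m → R) p.1 * φV p.2) =
      fun p : m × n => (V *ᵥ Pi.single j 1) p.1 * φV' p.2) :
    (star φU ⬝ᵥ φV) • (1 : Matrix m m R) = (star φU' ⬝ᵥ φV') • (Uᴴ * V) := by
  ext i j
  have h := star_mulVec_dotProduct_mulVec_of_mem_unitaryGroup hW
    (fun p => (Pi.single i 1 : m → R) p.1 * φU p.2)
    (fun p => (Pi.single j 1 : m → R) p.1 * φV p.2)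
  rw [hWU, hWV, star_dotProduct_prod_mul, star_dotProduct_prod_mul, star_mulVec,
    dotProduct_mulVec, vecMul_vecMul, ← dotProduct_mulVec, star_single_dotProduct_mulVec_single,
    ← one_mulVec (Pi.single j 1), star_single_dotProduct_mulVec_single] at h
  simp only [smul_apply, smul_eq_mul]
  linear_combination -h

theorem norm_eq_one_of_smul_mem_unitaryGroup [Fintype n] [DecidableEq n] [Nonempty n]
    {U : Matrix n n ℂ} {μ : ℂ} (hU : U ∈ unitaryGroup n ℂ) (hμU : μ • U ∈ unitaryGroup n ℂ) :
    ‖μ‖ = 1 := by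
  have h := Unitary.star_mul_self_of_mem hμU
  rw [star_smul, smul_mul_smul_comm, Unitary.star_mul_self_of_mem hU] at h
  obtain ⟨i⟩ := ‹Nonempty n›
  have hμ : star μ * μ = 1 := by simpa using congrFun (congrFun h i) i
  rw [Complex.star_def, Complex.conj_mul'] at hμ
  exact (pow_eq_one_iff_of_nonneg (norm_nonneg μ) two_ne_zero).1 (by exact_mod_cast hμ)

end Matrix

theorem Complex.exists_eq_exp_mul_I_of_norm_eq_one {μ : ℂ} (hμ : ‖μ‖ = 1) :
    ∃ θ : ℝ, μ = Complex.exp (θ * Complex.I) :=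
  ⟨μ.arg, by simpa [hμ] using (Complex.norm_mul_exp_arg_mul_I μ).symm⟩

theorem no_programming_unitaries_general
    {s a : Type*} [Fintype s] [DecidableEq s] [Fintype a] [DecidableEq a]
    (U V : Matrix s s ℂ)
    (hU : U ∈ Matrix.unitaryGroup s ℂ) (hV : V ∈ Matrix.unitaryGroup s ℂ)
    (hdist : ∀ θ : ℝ, V ≠ Complex.exp (θ * Complex.I) • U)
    (φU φV : a → ℂ)
    (W : Matrix (s × a) (s × a) ℂ) (hW : W ∈ Matrix.unitaryGroup (s × a) ℂ)
    (φU' φV' : a → ℂ)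
    (hWU : ∀ ψ : s → ℂ, star ψ ⬝ᵥ ψ = 1 →
      W *ᵥ (fun p : s × a => ψ p.1 * φU p.2) =
        (fun p : s × a => (U *ᵥ ψ) p.1 * φU' p.2))
    (hWV : ∀ ψ : s → ℂ, star ψ ⬝ᵥ ψ = 1 →
      W *ᵥ (fun p : s × a => ψ p.1 * φV p.2) =
        (fun p : s × a => (V *ᵥ ψ) p.1 * φV' p.2)) :
    star φU ⬝ᵥ φV = 0 := by
  rcases isEmpty_or_nonempty s with hs | hs
  · exact absurd (Subsingleton.elim _ _) (hdist 0)
  set k := star φU ⬝ᵥ φV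
  set c := star φU' ⬝ᵥ φV'
  have hscalar : k • (1 : Matrix s s ℂ) = c • (Uᴴ * V) :=
    smul_one_eq_smul_conjTranspose_mul_of_mulVec_prod hW (fun i => hWU _ (by simp))
      (fun j => hWV _ (by simp))
  by_contra hk
  have hc : c ≠ 0 := fun hc => hk (by
    simpa [hc] using congrFun (congrFun hscalar (Classical.arbitrary s)) (Classical.arbitrary s))
  have hVU : V = (k / c) • U := eq_smul_of_conjTranspose_mul_eq_smul_one hU (by
    rw [div_eq_inv_mul, mul_smul, hscalar, inv_smul_smul₀ hc])
  obtain ⟨θ, hθ⟩ := Complex.exists_eq_exp_mul_I_of_norm_eq_one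
    (norm_eq_one_of_smul_mem_unitaryGroup hU (hVU ▸ hV))
  exact hdist θ (hθ ▸ hVU)

/-- No-programming theorem for unitaries: if a programmable gate array `W`
implements the unitaries `U` and `V` (distinct even up to global phase) via
program states `φU`, `φV` with residual program states independent of the data,
then `⟨φU|φV⟩ = 0`. -/
theorem no_programming_unitaries
    {s a : Type*} [Fintype s] [DecidableEq s] [Fintype a] [DecidableEq a]
    (U V : Matrix s s ℂ)
    (hU : U ∈ Matrix.unitaryGroup s ℂ) (hV : V ∈ Matrix.unitaryGroup s ℂ)
    (hdist : ∀ θ : ℝ, V ≠ Complex.exp (θ * Complex.I) • U)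
    (φU φV : a → ℂ) (hφU : star φU ⬝ᵥ φU = 1) (hφV : star φV ⬝ᵥ φV = 1)
    (W : Matrix (s × a) (s × a) ℂ) (hW : W ∈ Matrix.unitaryGroup (s × a) ℂ)
    (φU' φV' : a → ℂ)
    (hWU : ∀ ψ : s → ℂ, star ψ ⬝ᵥ ψ = 1 →
      W *ᵥ (fun p : s × a => ψ p.1 * φU p.2) =
        (fun p : s × a => (U *ᵥ ψ) p.1 * φU' p.2))
    (hWV : ∀ ψ : s → ℂ, star ψ ⬝ᵥ ψ = 1 →
      W *ᵥ (fun p : s × a => ψ p.1 * φV p.2) =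
        (fun p : s × a => (V *ᵥ ψ) p.1 * φV' p.2)) :
    star φU ⬝ᵥ φV = 0 :=
  no_programming_unitaries_general U V hU hV hdist φU φV W hW φU' φV' hWU hWV
end

section
/- Let G be a finite group with unitary representation U on H, and let ρ be a perfectly asymmetric state (distinct orbit elements U(g)ρU(g)† are mutually orthogonal). Then there exists a G-covariant channel Φ : L(H) → L(H⊗H) — meaning Φ(U(g)XU(g)†) = (U(g)⊗U(g))Φ(X)(U(g)⊗U(g))† for all g and X — such that Φ(U(g)ρU(g)†) = U(g)ρU(g)† ⊗ U(g)ρU(g)† for all g ∈ G. (A perfectly asymmetric state can be cloned by symmetric processing.) -/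
open Matrix
open scoped ComplexOrder Kronecker

/-- The extension `Φ ⊗ id_d` of a linear map on matrices to matrices over a
`d`-dimensional ancilla. -/
noncomputable def matExtend {n m : Type*} [Fintype n] [DecidableEq n]
    [Fintype m] [DecidableEq m]
    (Φ : Matrix n n ℂ →ₗ[ℂ] Matrix m m ℂ) (d : ℕ)
    (X : Matrix (n × Fin d) (n × Fin d) ℂ) : Matrix (m × Fin d) (m × Fin d) ℂ :=
  Matrix.of fun p q => Φ (Matrix.of fun i j => X (i, p.2) (j, q.2)) p.1 q.1

/-- Complete positivity and trace preservation. -/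
def IsCPTP {n m : Type*} [Fintype n] [DecidableEq n] [Fintype m] [DecidableEq m]
    (Φ : Matrix n n ℂ →ₗ[ℂ] Matrix m m ℂ) : Prop :=
  (∀ (d : ℕ) (X : Matrix (n × Fin d) (n × Fin d) ℂ),
      X.PosSemidef → (matExtend Φ d X).PosSemidef) ∧
  (∀ X : Matrix n n ℂ, (Φ X).trace = X.trace)


/-!
Distinct states of the orbit `{U g ρ U gᴴ}` multiply to zero, so their support projections `P_σ`
are mutually orthogonal, and the measurement with effects `P_σ` together with `1 - ∑ P_σ`
identifies an orbit state with certainty. Preparing `σ ⊗ σ` on outcome `σ`, and the maximally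
mixed state on the remaining outcome, therefore clones the orbit. Conjugation by `U g` permutes
the orbit, hence the effects and the prepared states, which makes this measure-and-prepare
channel covariant.
-/

open scoped MatrixOrder

namespace Matrix

section SupportProjection

variable {n : Type*} [Fintype n] [DecidableEq n]

lemma continuousOn_real_spectrum (f : ℝ → ℝ) (A : Matrix n n ℂ) :
    ContinuousOn f (spectrum ℝ A) :=
  A.finite_real_spectrum.continuousOn f

lemma cfc_mul_cfc_eq {f g h : ℝ → ℝ} (hfg : ∀ x, f x * g x = h x) (A : Matrix n n ℂ) :
    cfc f A * cfc g A = cfc h A := by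
  rw [← cfc_mul _ _ A (continuousOn_real_spectrum _ _) (continuousOn_real_spectrum _ _)]
  exact cfc_congr fun x _ => hfg x

noncomputable def supportProj (A : Matrix n n ℂ) : Matrix n n ℂ :=
  cfc (fun x : ℝ => if x = 0 then 0 else 1) A

variable {A B : Matrix n n ℂ}

lemma isStarProjection_supportProj (A : Matrix n n ℂ) : IsStarProjection A.supportProj :=
  ⟨cfc_mul_cfc_eq (fun x => by by_cases hx : x = 0 <;> simp [hx]) A, cfc_predicate _ A⟩

lemma supportProj_mul_self (hA : IsSelfAdjoint A) : A.supportProj * A = A := by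
  conv_lhs => enter [2]; rw [← cfc_id' ℝ A]
  conv_rhs => rw [← cfc_id' ℝ A]
  exact cfc_mul_cfc_eq (fun x => by by_cases hx : x = 0 <;> simp [hx]) A

-- `x⁻¹ * x` is the indicator of `x ≠ 0` because `(0 : ℝ)⁻¹ = 0`.
lemma supportProj_eq_cfc_inv_mul (hA : IsSelfAdjoint A) :
    A.supportProj = cfc (·⁻¹ : ℝ → ℝ) A * A := by
  conv_rhs => enter [2]; rw [← cfc_id' ℝ A]
  exact (cfc_mul_cfc_eq (fun x => by by_cases hx : x = 0 <;> simp [hx]) A).symm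

lemma supportProj_eq_mul_cfc_inv (hA : IsSelfAdjoint A) :
    A.supportProj = A * cfc (·⁻¹ : ℝ → ℝ) A := by
  conv_rhs => enter [1]; rw [← cfc_id' ℝ A]
  exact (cfc_mul_cfc_eq (fun x => by by_cases hx : x = 0 <;> simp [hx]) A).symm

lemma supportProj_mul_of_mul_eq_zero (hA : IsSelfAdjoint A) (hAB : A * B = 0) :
    A.supportProj * B = 0 := by
  rw [supportProj_eq_cfc_inv_mul hA, Matrix.mul_assoc, hAB, Matrix.mul_zero]

lemma supportProj_mul_supportProj_of_mul_eq_zero (hA : IsSelfAdjoint A) (hB : IsSelfAdjoint B)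
    (hAB : A * B = 0) : A.supportProj * B.supportProj = 0 := by
  rw [supportProj_eq_mul_cfc_inv hB, ← Matrix.mul_assoc, supportProj_mul_of_mul_eq_zero hA hAB,
    Matrix.zero_mul]

lemma unitary_conj_supportProj (V : unitaryGroup n ℂ) (hA : IsSelfAdjoint A) :
    (V : Matrix n n ℂ) * A.supportProj * (V : Matrix n n ℂ)ᴴ =
      ((V : Matrix n n ℂ) * A * (V : Matrix n n ℂ)ᴴ).supportProj :=
  StarAlgHomClass.map_cfc (S := ℂ) (Unitary.conjStarAlgAut ℂ _ V) _ A
    (continuousOn_real_spectrum _ _) ((continuous_const.mul continuous_id).mul continuous_const)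
    hA (hA.conjugate _)

end SupportProjection

section UnitaryConj

variable {n : Type*} [Fintype n] [DecidableEq n]

lemma trace_unitary_conj (V : unitaryGroup n ℂ) (X : Matrix n n ℂ) :
    ((V : Matrix n n ℂ) * X * (V : Matrix n n ℂ)ᴴ).trace = X.trace := by
  rw [trace_mul_cycle, ← star_eq_conjTranspose, Unitary.coe_star_mul_self, Matrix.one_mul]

lemma unitary_conj_mul_unitary_conj (V : unitaryGroup n ℂ) (A B : Matrix n n ℂ) :
    (V : Matrix n n ℂ) * A * (V : Matrix n n ℂ)ᴴ * ((V : Matrix n n ℂ) * B * (V : Matrix n n ℂ)ᴴ) =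
      (V : Matrix n n ℂ) * (A * B) * (V : Matrix n n ℂ)ᴴ :=
  (map_mul (Unitary.conjStarAlgAut ℂ _ V) A B).symm

noncomputable def maximallyMixed (n : Type*) [Fintype n] [DecidableEq n] : Matrix n n ℂ :=
  (Fintype.card n : ℂ)⁻¹ • 1

lemma posSemidef_maximallyMixed : (maximallyMixed n).PosSemidef :=
  PosSemidef.one.smul (by positivity)

lemma trace_maximallyMixed [Nonempty n] : (maximallyMixed n).trace = 1 := by
  rw [maximallyMixed, trace_smul, trace_one, smul_eq_mul, inv_mul_cancel₀ (by simp)]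

lemma unitary_conj_maximallyMixed (W : unitaryGroup n ℂ) :
    (W : Matrix n n ℂ) * maximallyMixed n * (W : Matrix n n ℂ)ᴴ = maximallyMixed n := by
  rw [maximallyMixed, Matrix.mul_smul, Matrix.mul_one, Matrix.smul_mul, ← star_eq_conjTranspose,
    Unitary.mul_star_self_of_mem W.2]

end UnitaryConj

lemma trace_conjTranspose_mul_self_mul_block {n d : Type*} [Fintype n] [Fintype d]
    [DecidableEq d] (B : Matrix n n ℂ) (X : Matrix (n × d) (n × d) ℂ) (a b : d) :
    (Bᴴ * B * of fun i j => X (i, a) (j, b)).trace =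
      ∑ l, ((B ⊗ₖ (1 : Matrix d d ℂ)) * X * (B ⊗ₖ (1 : Matrix d d ℂ))ᴴ) (l, a) (l, b) := by
  rw [Matrix.mul_assoc, trace_mul_comm, Matrix.mul_assoc, trace]
  simp only [diag_apply, mul_apply, of_apply, conjTranspose_apply, RCLike.star_def,
    kroneckerMap_apply, one_apply, mul_ite, mul_one, mul_zero, ite_mul, zero_mul,
    Fintype.sum_prod_type, Finset.sum_ite_eq, Finset.mem_univ, if_true,
    apply_ite (starRingEnd ℂ), map_zero]
  refine Finset.sum_congr rfl fun l _ => ?_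
  simp only [Finset.mul_sum, Finset.sum_mul, mul_assoc]
  exact Finset.sum_comm

lemma posSemidef_trace_mul_blocks {n d : Type*} [Fintype n] [Fintype d]
    {E : Matrix n n ℂ} (hE : E.PosSemidef) {X : Matrix (n × d) (n × d) ℂ} (hX : X.PosSemidef) :
    (of fun a b : d => (E * of fun i j => X (i, a) (j, b)).trace).PosSemidef := by
  classical
  -- With `E = Bᴴ B`, this matrix is the partial trace over `n` of `(B ⊗ 1) X (B ⊗ 1)ᴴ`.
  obtain ⟨B, rfl⟩ := CStarAlgebra.nonneg_iff_eq_star_mul_self.mp hE.nonneg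
  have h : (of fun a b : d => (star B * B * of fun i j => X (i, a) (j, b)).trace) =
      ∑ l, ((B ⊗ₖ (1 : Matrix d d ℂ)) * X * (B ⊗ₖ (1 : Matrix d d ℂ))ᴴ).submatrix
        (Prod.mk l) (Prod.mk l) := by
    ext a b
    simp only [of_apply, star_eq_conjTranspose, trace_conjTranspose_mul_self_mul_block, sum_apply,
      submatrix_apply]
  rw [h]
  exact posSemidef_sum _ fun l _ => (hX.mul_mul_conjTranspose_same _).submatrix _

end Matrix

section MeasureAndPrepare

variable {n m ι : Type*} [Fintype n] [DecidableEq n] [Fintype m] [Fintype ι]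

noncomputable def measureAndPrepare (E : ι → Matrix n n ℂ) (τ : ι → Matrix m m ℂ) :
    Matrix n n ℂ →ₗ[ℂ] Matrix m m ℂ :=
  ∑ i, (traceLinearMap n ℂ ℂ ∘ₗ LinearMap.mulLeft ℂ (E i)).smulRight (τ i)

variable {E : ι → Matrix n n ℂ} {τ : ι → Matrix m m ℂ}

omit [Fintype m] in
lemma measureAndPrepare_apply (X : Matrix n n ℂ) :
    measureAndPrepare E τ X = ∑ i, (E i * X).trace • τ i := by
  simp [measureAndPrepare]

lemma measureAndPrepare_unitary_conj (V : unitaryGroup n ℂ) (W : Matrix m m ℂ) (π : ι ≃ ι)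
    (hE : ∀ i, (V : Matrix n n ℂ) * E i * (V : Matrix n n ℂ)ᴴ = E (π i))
    (hτ : ∀ i, W * τ i * Wᴴ = τ (π i)) (X : Matrix n n ℂ) :
    measureAndPrepare E τ ((V : Matrix n n ℂ) * X * (V : Matrix n n ℂ)ᴴ) =
      W * measureAndPrepare E τ X * Wᴴ := by
  simp only [measureAndPrepare_apply, Finset.mul_sum, Finset.sum_mul, Matrix.mul_smul,
    Matrix.smul_mul, hτ]
  rw [← π.sum_comp]
  simp only [← hE, unitary_conj_mul_unitary_conj, trace_unitary_conj]

variable [DecidableEq m]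

lemma matExtend_measureAndPrepare (d : ℕ) (X : Matrix (n × Fin d) (n × Fin d) ℂ) :
    matExtend (measureAndPrepare E τ) d X =
      ∑ i, τ i ⊗ₖ of fun a b => (E i * of fun k l => X (k, a) (l, b)).trace := by
  ext p q
  simp only [matExtend, of_apply, measureAndPrepare_apply, Matrix.sum_apply, Matrix.smul_apply,
    smul_eq_mul]
  exact Finset.sum_congr rfl fun i _ => mul_comm _ _

theorem isCPTP_measureAndPrepare (hE : ∀ i, (E i).PosSemidef) (hEsum : ∑ i, E i = 1)
    (hτ : ∀ i, (τ i).PosSemidef) (hτtr : ∀ i, (τ i).trace = 1) :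
    IsCPTP (measureAndPrepare E τ) := by
  refine ⟨fun d X hX => ?_, fun X => ?_⟩
  · rw [matExtend_measureAndPrepare]
    exact posSemidef_sum _ fun i _ => (hτ i).kronecker (posSemidef_trace_mul_blocks (hE i) hX)
  · rw [measureAndPrepare_apply, trace_sum]
    simp only [trace_smul, hτtr, smul_eq_mul, mul_one]
    rw [← trace_sum, ← Finset.sum_mul, hEsum, Matrix.one_mul]

end MeasureAndPrepare

section Cloning

variable {n ι : Type*} [Fintype n] [DecidableEq n] [Fintype ι]

noncomputable def cloningChannel (σ : ι → Matrix n n ℂ) (τ₀ : Matrix (n × n) (n × n) ℂ) :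
    Matrix n n ℂ →ₗ[ℂ] Matrix (n × n) (n × n) ℂ :=
  measureAndPrepare
    (fun i : Option ι => i.elim (1 - ∑ j, (σ j).supportProj) fun j => (σ j).supportProj)
    (fun i : Option ι => i.elim τ₀ fun j => σ j ⊗ₖ σ j)

variable {σ : ι → Matrix n n ℂ} {τ₀ : Matrix (n × n) (n × n) ℂ}

omit [Fintype ι] in
lemma orthogonalIdempotents_supportProj (hσ : ∀ i, IsSelfAdjoint (σ i))
    (horth : Pairwise fun i j => σ i * σ j = 0) :
    OrthogonalIdempotents fun i => (σ i).supportProj :=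
  ⟨fun _ => (isStarProjection_supportProj _).isIdempotentElem,
    fun i j hij => supportProj_mul_supportProj_of_mul_eq_zero (hσ i) (hσ j) (horth hij)⟩

lemma isStarProjection_sum_supportProj (hσ : ∀ i, IsSelfAdjoint (σ i))
    (horth : Pairwise fun i j => σ i * σ j = 0) :
    IsStarProjection (∑ i, (σ i).supportProj) :=
  (isStarProjection_iff _).mpr ⟨(orthogonalIdempotents_supportProj hσ horth).isIdempotentElem_sum,
    isSelfAdjoint_sum _ fun _ _ => (isStarProjection_supportProj _).isSelfAdjoint⟩

theorem isCPTP_cloningChannel (hσ : ∀ i, (σ i).PosSemidef) (hσtr : ∀ i, (σ i).trace = 1)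
    (horth : Pairwise fun i j => σ i * σ j = 0) (hτ₀ : τ₀.PosSemidef) (hτ₀tr : τ₀.trace = 1) :
    IsCPTP (cloningChannel σ τ₀) := by
  refine isCPTP_measureAndPrepare ?_ ?_ ?_ ?_
  · rintro (_ | j)
    · exact (isStarProjection_sum_supportProj (fun i => (hσ i).isHermitian)
        horth).one_sub_nonneg.posSemidef
    · exact (isStarProjection_supportProj _).nonneg.posSemidef
  · rw [Fintype.sum_option]
    exact sub_add_cancel _ _
  · rintro (_ | j)
    exacts [hτ₀, (hσ j).kronecker (hσ j)]
  · rintro (_ | j)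
    · exact hτ₀tr
    · exact (trace_kronecker _ _).trans (by rw [hσtr, mul_one])

theorem cloningChannel_apply_self (hσ : ∀ i, IsSelfAdjoint (σ i)) (hσtr : ∀ i, (σ i).trace = 1)
    (horth : Pairwise fun i j => σ i * σ j = 0) (i : ι) :
    cloningChannel σ τ₀ (σ i) = σ i ⊗ₖ σ i := by
  classical
  have hsupp : ∀ j, (σ j).supportProj * σ i = if j = i then σ i else 0 := fun j => by
    split_ifs with h
    · exact h ▸ supportProj_mul_self (hσ j)
    · exact supportProj_mul_of_mul_eq_zero (hσ j) (horth h)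
  have hcompl : (1 - ∑ j, (σ j).supportProj) * σ i = 0 := by
    simp [sub_mul, Finset.sum_mul, hsupp]
  simp [cloningChannel, measureAndPrepare_apply, Fintype.sum_option, hcompl, hsupp,
    apply_ite trace, hσtr]

theorem cloningChannel_unitary_conj (V : unitaryGroup n ℂ) (π : ι ≃ ι)
    (hσ : ∀ i, IsSelfAdjoint (σ i))
    (hπ : ∀ i, (V : Matrix n n ℂ) * σ i * (V : Matrix n n ℂ)ᴴ = σ (π i))
    (hτ₀ : ((V : Matrix n n ℂ) ⊗ₖ (V : Matrix n n ℂ)) * τ₀ *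
      ((V : Matrix n n ℂ) ⊗ₖ (V : Matrix n n ℂ))ᴴ = τ₀) (X : Matrix n n ℂ) :
    cloningChannel σ τ₀ ((V : Matrix n n ℂ) * X * (V : Matrix n n ℂ)ᴴ) =
      ((V : Matrix n n ℂ) ⊗ₖ (V : Matrix n n ℂ)) * cloningChannel σ τ₀ X *
        ((V : Matrix n n ℂ) ⊗ₖ (V : Matrix n n ℂ))ᴴ := by
  have hsupp : ∀ i, (V : Matrix n n ℂ) * (σ i).supportProj * (V : Matrix n n ℂ)ᴴ =
      (σ (π i)).supportProj := fun i => by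
    rw [unitary_conj_supportProj V (hσ i), hπ]
  refine measureAndPrepare_unitary_conj V _ (Equiv.optionCongr π) ?_ ?_ X
  · rintro (_ | j)
    · show (V : Matrix n n ℂ) * (1 - ∑ j, (σ j).supportProj) * (V : Matrix n n ℂ)ᴴ =
        1 - ∑ j, (σ j).supportProj
      rw [Matrix.mul_sub, Matrix.sub_mul, Matrix.mul_one, Finset.mul_sum, Finset.sum_mul]
      simp only [hsupp, π.sum_comp fun j => (σ j).supportProj]
      rw [← star_eq_conjTranspose, Unitary.mul_star_self_of_mem V.2]
    · exact hsupp j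
  · rintro (_ | j)
    · exact hτ₀
    · show _ * (σ j ⊗ₖ σ j) * _ = σ (π j) ⊗ₖ σ (π j)
      rw [conjTranspose_kronecker, ← mul_kronecker_mul, ← mul_kronecker_mul, hπ]

end Cloning

section Orbit

variable {G H : Type*} [Group G] [Fintype H] [DecidableEq H] (U : G →* unitaryGroup H ℂ)

lemma unitary_conj_unitary_conj (g h : G) (X : Matrix H H ℂ) :
    (U g : Matrix H H ℂ) * ((U h : Matrix H H ℂ) * X * (U h : Matrix H H ℂ)ᴴ) *
        (U g : Matrix H H ℂ)ᴴ =
      (U (g * h) : Matrix H H ℂ) * X * (U (g * h) : Matrix H H ℂ)ᴴ := by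
  simp only [map_mul, UnitaryGroup.mul_apply, conjTranspose_mul, Matrix.mul_assoc]

-- An `abbrev`, so that `Set.range` provides the `Fintype` instance.
abbrev conjOrbit (ρ : Matrix H H ℂ) : Set (Matrix H H ℂ) :=
  Set.range fun g => (U g : Matrix H H ℂ) * ρ * (U g : Matrix H H ℂ)ᴴ

lemma unitary_conj_mem_conjOrbit_iff (ρ : Matrix H H ℂ) (g : G) (X : Matrix H H ℂ) :
    (U g : Matrix H H ℂ) * X * (U g : Matrix H H ℂ)ᴴ ∈ conjOrbit U ρ ↔ X ∈ conjOrbit U ρ := by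
  constructor
  · rintro ⟨h, hh⟩
    refine ⟨g⁻¹ * h, ?_⟩
    simp only [← unitary_conj_unitary_conj U g⁻¹ h, hh, unitary_conj_unitary_conj, inv_mul_cancel,
      map_one]
    simp
  · rintro ⟨h, rfl⟩
    exact ⟨g * h, (unitary_conj_unitary_conj U g h ρ).symm⟩

def conjOrbitPerm (ρ : Matrix H H ℂ) (g : G) : Equiv.Perm (conjOrbit U ρ) :=
  Equiv.Perm.subtypePerm (Unitary.conjStarAlgAut ℂ _ (U g)).toEquiv
    (unitary_conj_mem_conjOrbit_iff U ρ g)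

end Orbit

/-- A perfectly asymmetric state can be cloned by symmetric (G-covariant)
processing. -/
theorem perfectly_asymmetric_state_cloned_covariantly
    {G : Type*} [Group G] [Fintype G]
    {H : Type*} [Fintype H] [DecidableEq H]
    (U : G →* Matrix.unitaryGroup H ℂ)
    (ρ : Matrix H H ℂ) (hρ : ρ.PosSemidef) (hρtr : ρ.trace = 1)
    (hPA : ∀ g h : G,
      (U g : Matrix H H ℂ) * ρ * (U g : Matrix H H ℂ)ᴴ ≠
        (U h : Matrix H H ℂ) * ρ * (U h : Matrix H H ℂ)ᴴ →
      ((U g : Matrix H H ℂ) * ρ * (U g : Matrix H H ℂ)ᴴ) *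
        ((U h : Matrix H H ℂ) * ρ * (U h : Matrix H H ℂ)ᴴ) = 0) :
    ∃ Φ : Matrix H H ℂ →ₗ[ℂ] Matrix (H × H) (H × H) ℂ,
      IsCPTP Φ ∧
      (∀ (g : G) (X : Matrix H H ℂ),
        Φ ((U g : Matrix H H ℂ) * X * (U g : Matrix H H ℂ)ᴴ) =
          ((U g : Matrix H H ℂ) ⊗ₖ (U g : Matrix H H ℂ)) * Φ X *
            ((U g : Matrix H H ℂ) ⊗ₖ (U g : Matrix H H ℂ))ᴴ) ∧
      (∀ g : G,
        Φ ((U g : Matrix H H ℂ) * ρ * (U g : Matrix H H ℂ)ᴴ) =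
          ((U g : Matrix H H ℂ) * ρ * (U g : Matrix H H ℂ)ᴴ) ⊗ₖ
            ((U g : Matrix H H ℂ) * ρ * (U g : Matrix H H ℂ)ᴴ)) := by
  classical
  have : Nonempty H := by
    by_contra h
    simp [not_nonempty_iff.mp h, trace] at hρtr
  let σ : conjOrbit U ρ → Matrix H H ℂ := Subtype.val
  have hσ : ∀ x, (σ x).PosSemidef := by
    rintro ⟨_, g, rfl⟩
    exact hρ.mul_mul_conjTranspose_same _
  have hσtr : ∀ x, (σ x).trace = 1 := by
    rintro ⟨_, g, rfl⟩
    exact (trace_unitary_conj _ _).trans hρtr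
  have horth : Pairwise fun x y => σ x * σ y = 0 := by
    rintro ⟨_, g, rfl⟩ ⟨_, h, rfl⟩ hne
    exact hPA g h fun heq => hne (Subtype.ext heq)
  have hσsa : ∀ x, IsSelfAdjoint (σ x) := fun x => (hσ x).isHermitian
  refine ⟨cloningChannel σ (maximallyMixed (H × H)),
    isCPTP_cloningChannel hσ hσtr horth posSemidef_maximallyMixed trace_maximallyMixed,
    fun g X => ?_, fun g => cloningChannel_apply_self hσsa hσtr horth ⟨_, g, rfl⟩⟩
  exact cloningChannel_unitary_conj (U g) (conjOrbitPerm U ρ g) hσsa (fun _ => rfl)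
    (unitary_conj_maximallyMixed ⟨_, kronecker_mem_unitary (U g).2 (U g).2⟩) X
end

section
/- Let G be a finite group with unitary representations U_s on H_s and U_a on H_a, and suppose there exists a POVM {Q_k} on H_s⊗H_a and a state ρ_a such that Tr(Q_k(ρ_s ⊗ U_a(g)ρ_aU_a(g)†)) = Tr(U_s(g)Π_kU_s(g)†ρ_s) for all g ∈ G, all states ρ_s, and all k. Then the group-averaged POVM E_k = (1/|G|)Σ_{g∈G} (U_s(g)⊗U_a(g)) Q_k (U_s(g)⊗U_a(g))† is a symmetric POVM satisfying Tr(E_k(ρ_s⊗ρ_a)) = Tr(Π_kρ_s) for all ρ_s and k. -/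
open Matrix
open scoped ComplexOrder Kronecker

/-!
Twirling over `g ↦ Us g ⊗ Ua g` preserves positivity and the completeness relation `∑ k Q k = 1`,
and its output commutes with the representation. The statistics of the twirled `Q k` on
`ρs ⊗ ρa` are the average over `g` of those of `Q k` on `Us(g)† ρs Us(g) ⊗ Ua(g⁻¹) ρa Ua(g⁻¹)†`;
covariance at `g⁻¹` turns each of these into `Tr(Π_k ρs)`, the conjugations by `Us g` cancelling.
-/

namespace Matrix

section Representation

variable {G : Type*} [Group G] {R : Type*} [CommRing R] [StarRing R]
  {n m : Type*} [Fintype n] [DecidableEq n] [Fintype m] [DecidableEq m]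

theorem coe_map_inv_eq_conjTranspose (U : G →* unitaryGroup n R) (g : G) :
    (U g⁻¹ : Matrix n n R) = (U g : Matrix n n R)ᴴ := by
  rw [map_inv, UnitaryGroup.inv_val, star_eq_conjTranspose]

theorem UnitaryGroup.mul_conjTranspose_self (U : unitaryGroup n R) :
    (U : Matrix n n R) * (U : Matrix n n R)ᴴ = 1 :=
  Unitary.coe_mul_star_self U

theorem UnitaryGroup.conjTranspose_mul_self (U : unitaryGroup n R) :
    (U : Matrix n n R)ᴴ * (U : Matrix n n R) = 1 :=
  Unitary.coe_star_mul_self U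

theorem UnitaryGroup.trace_conj (U : unitaryGroup n R) (A : Matrix n n R) :
    ((U : Matrix n n R)ᴴ * A * U).trace = A.trace := by
  rw [trace_mul_cycle, mul_conjTranspose_self, one_mul]

theorem UnitaryGroup.trace_conj_mul_conj (U : unitaryGroup n R) (A B : Matrix n n R) :
    ((U : Matrix n n R)ᴴ * A * U * ((U : Matrix n n R)ᴴ * B * U)).trace = (A * B).trace := by
  have hcancel : (U : Matrix n n R)ᴴ * A * U * ((U : Matrix n n R)ᴴ * B * U) =
      (U : Matrix n n R)ᴴ * (A * B) * U := by
    simp only [← mul_assoc, mul_assoc _ (U : Matrix n n R) (U : Matrix n n R)ᴴ,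
      mul_conjTranspose_self, mul_one]
  rw [hcancel, trace_conj]

def kroneckerRep (U : G →* unitaryGroup n R) (V : G →* unitaryGroup m R) :
    G →* unitaryGroup (n × m) R where
  toFun g := ⟨(U g : Matrix n n R) ⊗ₖ (V g : Matrix m m R), kronecker_mem_unitary (U g).2 (V g).2⟩
  map_one' := Subtype.ext <| by simp only [map_one, UnitaryGroup.one_val, one_kronecker_one]
  map_mul' g h := Subtype.ext <| by simp only [map_mul, UnitaryGroup.mul_val, mul_kronecker_mul]

@[simp]
theorem coe_kroneckerRep (U : G →* unitaryGroup n R) (V : G →* unitaryGroup m R) (g : G) :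
    (kroneckerRep U V g : Matrix (n × m) (n × m) R) =
      (U g : Matrix n n R) ⊗ₖ (V g : Matrix m m R) :=
  rfl

theorem kroneckerRep_conj_kronecker (U : G →* unitaryGroup n R) (V : G →* unitaryGroup m R)
    (g : G) (A : Matrix n n R) (B : Matrix m m R) :
    (kroneckerRep U V g : Matrix (n × m) (n × m) R)ᴴ * (A ⊗ₖ B) *
        (kroneckerRep U V g : Matrix (n × m) (n × m) R) =
      ((U g : Matrix n n R)ᴴ * A * (U g : Matrix n n R)) ⊗ₖ
        ((V g : Matrix m m R)ᴴ * B * (V g : Matrix m m R)) := by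
  rw [coe_kroneckerRep, conjTranspose_kronecker, ← mul_kronecker_mul, ← mul_kronecker_mul]

end Representation

section GroupAverage

variable {G : Type*} [Group G] [Fintype G] {𝕜 : Type*} [RCLike 𝕜]
  {n : Type*} [Fintype n] [DecidableEq n]

noncomputable def groupAverage (U : G →* unitaryGroup n 𝕜) (M : Matrix n n 𝕜) : Matrix n n 𝕜 :=
  (Fintype.card G : 𝕜)⁻¹ • ∑ g, (U g : Matrix n n 𝕜) * M * (U g : Matrix n n 𝕜)ᴴ

variable (U : G →* unitaryGroup n 𝕜)

theorem PosSemidef.groupAverage {M : Matrix n n 𝕜} (hM : M.PosSemidef) :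
    (groupAverage U M).PosSemidef :=
  (posSemidef_sum _ fun _ _ => hM.mul_mul_conjTranspose_same _).smul
    (inv_nonneg.2 (Nat.cast_nonneg _))

theorem sum_groupAverage {ι : Type*} [Fintype ι] (M : ι → Matrix n n 𝕜) :
    ∑ i, groupAverage U (M i) = groupAverage U (∑ i, M i) := by
  simp only [groupAverage, ← Finset.smul_sum, Finset.mul_sum, Finset.sum_mul]
  rw [Finset.sum_comm]

theorem groupAverage_one : groupAverage U 1 = 1 := by
  have hcard : (Fintype.card G : 𝕜) ≠ 0 := Nat.cast_ne_zero.2 Fintype.card_ne_zero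
  simp only [groupAverage, mul_one, UnitaryGroup.mul_conjTranspose_self, Finset.sum_const,
    Finset.card_univ, ← Nat.cast_smul_eq_nsmul 𝕜, smul_smul, inv_mul_cancel₀ hcard, one_smul]

theorem conj_groupAverage (h : G) (M : Matrix n n 𝕜) :
    (U h : Matrix n n 𝕜) * groupAverage U M * (U h : Matrix n n 𝕜)ᴴ = groupAverage U M := by
  simp only [groupAverage, Matrix.mul_smul, Matrix.smul_mul, Finset.mul_sum, Finset.sum_mul]
  congr 1
  refine Fintype.sum_equiv (Equiv.mulLeft h) _ _ fun g => ?_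
  simp only [Equiv.coe_mulLeft, map_mul, UnitaryGroup.mul_val, conjTranspose_mul, mul_assoc]

theorem commute_groupAverage (h : G) (M : Matrix n n 𝕜) :
    Commute (groupAverage U M) (U h : Matrix n n 𝕜) := by
  calc groupAverage U M * U h
      = U h * groupAverage U M * (U h : Matrix n n 𝕜)ᴴ * U h := by rw [conj_groupAverage]
    _ = U h * groupAverage U M := by
      rw [mul_assoc _ _ (U h : Matrix n n 𝕜), UnitaryGroup.conjTranspose_mul_self, mul_one]

theorem trace_groupAverage_mul_of_forall {M ρ : Matrix n n 𝕜} {c : 𝕜}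
    (hc : ∀ g, (M * ((U g : Matrix n n 𝕜)ᴴ * ρ * U g)).trace = c) :
    (groupAverage U M * ρ).trace = c := by
  have hcard : (Fintype.card G : 𝕜) ≠ 0 := Nat.cast_ne_zero.2 Fintype.card_ne_zero
  have hterm : ∀ g, ((U g : Matrix n n 𝕜) * M * (U g : Matrix n n 𝕜)ᴴ * ρ).trace = c := fun g => by
    rw [← hc g, mul_assoc, mul_assoc, trace_mul_comm]
    simp only [mul_assoc]
  simp only [groupAverage, smul_mul, trace_smul, Finset.sum_mul, trace_sum, hterm,
    Finset.sum_const, Finset.card_univ, nsmul_eq_mul, smul_eq_mul, inv_mul_cancel_left₀ hcard]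

end GroupAverage

end Matrix

theorem group_average_gives_symmetric_simulation_general
    {G : Type*} [Group G] [Fintype G]
    {s a κ : Type*} [Fintype s] [DecidableEq s] [Fintype a] [DecidableEq a] [Fintype κ]
    (Us : G →* Matrix.unitaryGroup s ℂ) (Ua : G →* Matrix.unitaryGroup a ℂ)
    (ρa : Matrix a a ℂ)
    (P : κ → Matrix s s ℂ)
    (Q : κ → Matrix (s × a) (s × a) ℂ)
    (hQpos : ∀ k, (Q k).PosSemidef) (hQsum : ∑ k, Q k = 1)
    (hsim : ∀ (g : G) (k : κ), ∀ ρs : Matrix s s ℂ, ρs.PosSemidef → ρs.trace = 1 →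
      (Q k * (ρs ⊗ₖ ((Ua g : Matrix a a ℂ) * ρa * (Ua g : Matrix a a ℂ)ᴴ))).trace =
      ((Us g : Matrix s s ℂ) * P k * (Us g : Matrix s s ℂ)ᴴ * ρs).trace)
    (E : κ → Matrix (s × a) (s × a) ℂ)
    (hE : E = fun k => ((Fintype.card G : ℂ))⁻¹ •
      ∑ g : G, ((Us g : Matrix s s ℂ) ⊗ₖ (Ua g : Matrix a a ℂ)) * Q k *
        ((Us g : Matrix s s ℂ) ⊗ₖ (Ua g : Matrix a a ℂ))ᴴ) :
    (∀ k, (E k).PosSemidef) ∧ (∑ k, E k = 1) ∧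
    (∀ k (g : G), E k * ((Us g : Matrix s s ℂ) ⊗ₖ (Ua g : Matrix a a ℂ)) =
      ((Us g : Matrix s s ℂ) ⊗ₖ (Ua g : Matrix a a ℂ)) * E k) ∧
    (∀ k, ∀ ρs : Matrix s s ℂ, ρs.PosSemidef → ρs.trace = 1 →
      (E k * (ρs ⊗ₖ ρa)).trace = (P k * ρs).trace) := by
  set V := kroneckerRep Us Ua
  obtain rfl : E = fun k => groupAverage V (Q k) := hE
  refine ⟨fun k => (hQpos k).groupAverage V, ?_, fun k g => commute_groupAverage V g (Q k), ?_⟩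
  · rw [sum_groupAverage, hQsum, groupAverage_one]
  intro k ρs hρs hρs_trace
  refine trace_groupAverage_mul_of_forall V fun g => ?_
  set ρs' := (Us g : Matrix s s ℂ)ᴴ * ρs * (Us g : Matrix s s ℂ)
  have hρs'_trace : ρs'.trace = 1 := by rw [UnitaryGroup.trace_conj, hρs_trace]
  calc (Q k * ((V g : Matrix (s × a) (s × a) ℂ)ᴴ * (ρs ⊗ₖ ρa) * V g)).trace
      = (Q k * (ρs' ⊗ₖ ((Ua g⁻¹ : Matrix a a ℂ) * ρa * (Ua g⁻¹ : Matrix a a ℂ)ᴴ))).trace := by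
        rw [kroneckerRep_conj_kronecker, coe_map_inv_eq_conjTranspose, conjTranspose_conjTranspose]
    _ = ((Us g⁻¹ : Matrix s s ℂ) * P k * (Us g⁻¹ : Matrix s s ℂ)ᴴ * ρs').trace :=
        hsim g⁻¹ k ρs' (hρs.conjTranspose_mul_mul_same _) hρs'_trace
    _ = (P k * ρs).trace := by
        rw [coe_map_inv_eq_conjTranspose, conjTranspose_conjTranspose,
          UnitaryGroup.trace_conj_mul_conj]

/-- Nontrivial direction of the duality lemma: if some POVM `{Q k}` covariantly
programs the group orbit of `{P k}` using the orbit of `ρa`, then the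
group-averaged POVM `E_k = (1/|G|) Σ_g (U_s(g)⊗U_a(g)) Q_k (U_s(g)⊗U_a(g))†`
is a symmetric POVM simulating `{P k}` from `ρa`. -/
theorem group_average_gives_symmetric_simulation
    {G : Type*} [Group G] [Fintype G]
    {s a κ : Type*} [Fintype s] [DecidableEq s] [Fintype a] [DecidableEq a] [Fintype κ]
    (Us : G →* Matrix.unitaryGroup s ℂ) (Ua : G →* Matrix.unitaryGroup a ℂ)
    (ρa : Matrix a a ℂ) (hρa : ρa.PosSemidef) (hρatr : ρa.trace = 1)
    (P : κ → Matrix s s ℂ)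
    (hherm : ∀ k, (P k).IsHermitian) (hidem : ∀ k, P k * P k = P k)
    (horth : ∀ k l, k ≠ l → P k * P l = 0) (hsum : ∑ k, P k = 1)
    (Q : κ → Matrix (s × a) (s × a) ℂ)
    (hQpos : ∀ k, (Q k).PosSemidef) (hQsum : ∑ k, Q k = 1)
    (hsim : ∀ (g : G) (k : κ), ∀ ρs : Matrix s s ℂ, ρs.PosSemidef → ρs.trace = 1 →
      (Q k * (ρs ⊗ₖ ((Ua g : Matrix a a ℂ) * ρa * (Ua g : Matrix a a ℂ)ᴴ))).trace =
      ((Us g : Matrix s s ℂ) * P k * (Us g : Matrix s s ℂ)ᴴ * ρs).trace)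
    (E : κ → Matrix (s × a) (s × a) ℂ)
    (hE : E = fun k => ((Fintype.card G : ℂ))⁻¹ •
      ∑ g : G, ((Us g : Matrix s s ℂ) ⊗ₖ (Ua g : Matrix a a ℂ)) * Q k *
        ((Us g : Matrix s s ℂ) ⊗ₖ (Ua g : Matrix a a ℂ))ᴴ) :
    (∀ k, (E k).PosSemidef) ∧ (∑ k, E k = 1) ∧
    (∀ k (g : G), E k * ((Us g : Matrix s s ℂ) ⊗ₖ (Ua g : Matrix a a ℂ)) =
      ((Us g : Matrix s s ℂ) ⊗ₖ (Ua g : Matrix a a ℂ)) * E k) ∧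
    (∀ k, ∀ ρs : Matrix s s ℂ, ρs.PosSemidef → ρs.trace = 1 →
      (E k * (ρs ⊗ₖ ρa)).trace = (P k * ρs).trace) :=
  group_average_gives_symmetric_simulation_general Us Ua ρa P Q hQpos hQsum hsim E hE
end

section
/- Let P₁ ≠ P₂ be two projectors on H_s with ‖P₁ − P₂‖ < 1 in operator norm (so there is a unit vector |α⟩ in the range of P₁ and |β⟩ in the kernel of P₂ with ⟨α|β⟩ ≠ 0). Suppose program states |φ₁⟩, |φ₂⟩ and an effect E on H_s⊗H_a satisfy |⟨α⊗φ₁|E|α⊗φ₁⟩ − 1| ≤ ε and ⟨β⊗φ₂|E|β⊗φ₂⟩ ≤ ε. Then |⟨φ₁|φ₂⟩| ≤ (√(2ε) + √ε)/|⟨α|β⟩|, giving a quantitative bound on approximate programming. -/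
/-!
With `ψ = α ⊗ φ₁` and `χ = β ⊗ φ₂` we have `⟨ψ|χ⟩ = ⟨α|β⟩⟨φ₁|φ₂⟩`. Splitting
`⟨ψ|χ⟩ = ⟨ψ|E|χ⟩ + ⟨ψ|1 - E|χ⟩` and applying Cauchy–Schwarz to the semi-inner products defined
by `E` and `1 - E` bounds `|⟨ψ|χ⟩|` by `√(⟨ψ|E|ψ⟩⟨χ|E|χ⟩) + √(⟨ψ|1 - E|ψ⟩⟨χ|1 - E|χ⟩)`. In each
product one factor is at most `ε` (rejection of `χ`, acceptance of `ψ`) and the other at most `1`,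
so `|⟨α|β⟩||⟨φ₁|φ₂⟩| ≤ 2√ε`.
-/

open Matrix RCLike
open scoped ComplexOrder

namespace Matrix

variable {n 𝕜 : Type*} [Fintype n] [RCLike 𝕜]

theorem PosSemidef.norm_star_dotProduct_mulVec_le {M : Matrix n n 𝕜} (hM : M.PosSemidef)
    (x y : n → 𝕜) :
    ‖star x ⬝ᵥ (M *ᵥ y)‖ ≤ √(re (star x ⬝ᵥ (M *ᵥ x))) * √(re (star y ⬝ᵥ (M *ᵥ y))) := by
  let := M.toSeminormedAddCommGroup hM
  let := M.toInnerProductSpace hM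
  have h : ‖(M *ᵥ y) ⬝ᵥ star x‖ ≤ √(re ((M *ᵥ x) ⬝ᵥ star x)) * √(re ((M *ᵥ y) ⬝ᵥ star y)) := by
    have := norm_inner_le_norm (𝕜 := 𝕜) x y
    rwa [norm_eq_sqrt_re_inner (𝕜 := 𝕜) x, norm_eq_sqrt_re_inner (𝕜 := 𝕜) y] at this
  simpa only [dotProduct_comm (M *ᵥ _)] using h

section Effect

variable [DecidableEq n] {E : Matrix n n 𝕜} {x y : n → 𝕜}

theorem re_star_dotProduct_one_sub_mulVec (hx : star x ⬝ᵥ x = 1) :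
    re (star x ⬝ᵥ ((1 - E) *ᵥ x)) = 1 - re (star x ⬝ᵥ (E *ᵥ x)) := by
  rw [sub_mulVec, one_mulVec, dotProduct_sub, hx, map_sub, one_re]

theorem re_star_dotProduct_mulVec_le_one (hE' : (1 - E).PosSemidef) (hx : star x ⬝ᵥ x = 1) :
    re (star x ⬝ᵥ (E *ᵥ x)) ≤ 1 := by
  have := hE'.re_dotProduct_nonneg x
  rw [re_star_dotProduct_one_sub_mulVec hx] at this
  linarith

theorem norm_star_dotProduct_le_of_effect (hE : E.PosSemidef) (hE' : (1 - E).PosSemidef)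
    (hx : star x ⬝ᵥ x = 1) (hy : star y ⬝ᵥ y = 1) :
    ‖star x ⬝ᵥ y‖ ≤
      √(re (star x ⬝ᵥ (E *ᵥ x))) * √(re (star y ⬝ᵥ (E *ᵥ y))) +
        √(1 - re (star x ⬝ᵥ (E *ᵥ x))) * √(1 - re (star y ⬝ᵥ (E *ᵥ y))) := by
  have hsplit : star x ⬝ᵥ y = star x ⬝ᵥ (E *ᵥ y) + star x ⬝ᵥ ((1 - E) *ᵥ y) := by
    rw [← dotProduct_add, ← add_mulVec, add_sub_cancel, one_mulVec]
  rw [hsplit, ← re_star_dotProduct_one_sub_mulVec hx, ← re_star_dotProduct_one_sub_mulVec hy]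
  exact (norm_add_le _ _).trans <|
    add_le_add (hE.norm_star_dotProduct_mulVec_le x y) (hE'.norm_star_dotProduct_mulVec_le x y)

theorem norm_star_dotProduct_le_two_mul_sqrt (hE : E.PosSemidef) (hE' : (1 - E).PosSemidef)
    (hx : star x ⬝ᵥ x = 1) (hy : star y ⬝ᵥ y = 1) {ε : ℝ}
    (hacc : 1 - ε ≤ re (star x ⬝ᵥ (E *ᵥ x))) (hrej : re (star y ⬝ᵥ (E *ᵥ y)) ≤ ε) :
    ‖star x ⬝ᵥ y‖ ≤ 2 * √ε := by
  have hx1 := re_star_dotProduct_mulVec_le_one hE' hx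
  have hy0 := hE.re_dotProduct_nonneg y
  calc ‖star x ⬝ᵥ y‖
      ≤ √(re (star x ⬝ᵥ (E *ᵥ x))) * √(re (star y ⬝ᵥ (E *ᵥ y))) +
        √(1 - re (star x ⬝ᵥ (E *ᵥ x))) * √(1 - re (star y ⬝ᵥ (E *ᵥ y))) :=
        norm_star_dotProduct_le_of_effect hE hE' hx hy
    _ ≤ 1 * √ε + √ε * 1 := by
        gcongr
        · exact Real.sqrt_le_one.mpr hx1
        · linarith
        · exact Real.sqrt_le_one.mpr (by linarith)
    _ = 2 * √ε := by ring

end Effect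

theorem star_dotProduct_tensor {s a R : Type*} [Fintype s] [Fintype a] [CommSemiring R]
    [StarRing R] (α β : s → R) (φ ψ : a → R) :
    star (fun p : s × a => α p.1 * φ p.2) ⬝ᵥ (fun p : s × a => β p.1 * ψ p.2) =
      (star α ⬝ᵥ β) * (star φ ⬝ᵥ ψ) := by
  simp only [dotProduct, Fintype.sum_prod_type, Pi.star_apply, star_mul', Finset.sum_mul_sum]
  exact Finset.sum_congr rfl fun _ _ => Finset.sum_congr rfl fun _ _ => by ring

end Matrix

theorem approximate_no_programming_bound_general
    {s a : Type*} [Fintype s] [DecidableEq s] [Fintype a] [DecidableEq a]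
    (α β : s → ℂ) (hα : star α ⬝ᵥ α = 1) (hβ : star β ⬝ᵥ β = 1)
    (hab : star α ⬝ᵥ β ≠ 0)
    (φ₁ φ₂ : a → ℂ) (hφ₁ : star φ₁ ⬝ᵥ φ₁ = 1) (hφ₂ : star φ₂ ⬝ᵥ φ₂ = 1)
    (E : Matrix (s × a) (s × a) ℂ) (hE : E.PosSemidef) (hE' : (1 - E).PosSemidef)
    (ε : ℝ)
    (h₁ : ‖
      (star (fun p : s × a => α p.1 * φ₁ p.2) ⬝ᵥ
        (E *ᵥ fun p : s × a => α p.1 * φ₁ p.2) - 1)‖ ≤ ε)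
    (h₂ : (star (fun p : s × a => β p.1 * φ₂ p.2) ⬝ᵥ
        (E *ᵥ fun p : s × a => β p.1 * φ₂ p.2)).re ≤ ε) :
    ‖star φ₁ ⬝ᵥ φ₂‖ ≤
      (Real.sqrt (2 * ε) + Real.sqrt ε) / ‖star α ⬝ᵥ β‖ := by
  have hacc : 1 - ε ≤ (star (fun p : s × a => α p.1 * φ₁ p.2) ⬝ᵥ
      (E *ᵥ fun p : s × a => α p.1 * φ₁ p.2)).re := by
    have := (Complex.abs_re_le_norm _).trans h₁
    rw [Complex.sub_re, Complex.one_re, abs_le] at this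
    linarith
  have hnear := norm_star_dotProduct_le_two_mul_sqrt hE hE'
    (by rw [star_dotProduct_tensor α α φ₁ φ₁, hα, hφ₁, one_mul])
    (by rw [star_dotProduct_tensor β β φ₂ φ₂, hβ, hφ₂, one_mul]) hacc h₂
  rw [star_dotProduct_tensor, norm_mul] at hnear
  rw [le_div_iff₀ (norm_pos_iff.mpr hab), mul_comm]
  calc ‖star α ⬝ᵥ β‖ * ‖star φ₁ ⬝ᵥ φ₂‖ ≤ 2 * √ε := hnear
    _ ≤ √(2 * ε) + √ε := by
        rw [two_mul]
        gcongr
        linarith [(norm_nonneg _).trans h₁]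

/-- Quantitative no-programming bound: if an effect `E` approximately accepts
`α⊗φ₁` (up to `ε`) and approximately rejects `β⊗φ₂` (up to `ε`), where `α` is
in the range of `P₁`, `β` is in the kernel of `P₂`, and `⟨α|β⟩ ≠ 0`, then
`|⟨φ₁|φ₂⟩| ≤ (√(2ε) + √ε)/|⟨α|β⟩|`. -/
theorem approximate_no_programming_bound
    {s a : Type*} [Fintype s] [DecidableEq s] [Fintype a] [DecidableEq a]
    (P₁ P₂ : Matrix s s ℂ)
    (hP₁herm : P₁.IsHermitian) (hP₁idem : P₁ * P₁ = P₁)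
    (hP₂herm : P₂.IsHermitian) (hP₂idem : P₂ * P₂ = P₂)
    (hP : P₁ ≠ P₂)
    (α β : s → ℂ) (hα : star α ⬝ᵥ α = 1) (hβ : star β ⬝ᵥ β = 1)
    (hαP : P₁ *ᵥ α = α) (hβP : P₂ *ᵥ β = 0)
    (hab : star α ⬝ᵥ β ≠ 0)
    (φ₁ φ₂ : a → ℂ) (hφ₁ : star φ₁ ⬝ᵥ φ₁ = 1) (hφ₂ : star φ₂ ⬝ᵥ φ₂ = 1)
    (E : Matrix (s × a) (s × a) ℂ) (hE : E.PosSemidef) (hE' : (1 - E).PosSemidef)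
    (ε : ℝ) (hε : 0 ≤ ε)
    (h₁ : ‖
      (star (fun p : s × a => α p.1 * φ₁ p.2) ⬝ᵥ
        (E *ᵥ fun p : s × a => α p.1 * φ₁ p.2) - 1)‖ ≤ ε)
    (h₂ : (star (fun p : s × a => β p.1 * φ₂ p.2) ⬝ᵥ
        (E *ᵥ fun p : s × a => β p.1 * φ₂ p.2)).re ≤ ε) :
    ‖star φ₁ ⬝ᵥ φ₂‖ ≤
      (Real.sqrt (2 * ε) + Real.sqrt ε) / ‖star α ⬝ᵥ β‖ :=
  approximate_no_programming_bound_general α β hα hβ hab φ₁ φ₂ hφ₁ hφ₂ E hE hE' ε h₁ h₂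
end
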